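/- arXiv:2210.05212 — 8 statements merged into one kernel-verified Lean document; each statement's English description precedes it below -/
import Mathlib

section
/- For every integer k ≥ 2, if the weights a_1, …, a_k are i.i.d. Gaussian N(0, 1/(4k log k)) and the biases b_1, …, b_k are i.i.d. Uniform[0,1] independent of the weights, then the probability that the RNN step map f_{a,b} is Li-Yorke chaotic is at most 1/k. -/
open MeasureTheory ProbabilityTheory Filter Set
open scoped NNReal ENNReal
open Real

/-- Clip a real number to the interval `[0,1]`. -/
noncomputable def clip (y : ℝ) : ℝ := min (max y 0) 1

/-- The RNN step map `f_{a,b}(x) = clip (∑ i, a i * ReLU (x - b i))`. -/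
noncomputable def rnnStep {k : ℕ} (a b : Fin k → ℝ) (x : ℝ) : ℝ :=
  clip (∑ i, a i * max (x - b i) 0)

/-- `f` is Li-Yorke chaotic on `[0,1]`: there is an uncountable scrambled set. -/
def LiYorkeChaotic (f : ℝ → ℝ) : Prop :=
  ∃ S : Set ℝ, S ⊆ Set.Icc 0 1 ∧ ¬ S.Countable ∧
    ∀ x ∈ S, ∀ y ∈ S, x ≠ y →
      Filter.liminf (fun n => |f^[n] x - f^[n] y|) Filter.atTop = 0 ∧
      0 < Filter.limsup (fun n => |f^[n] x - f^[n] y|) Filter.atTop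

/-- The joint law of `k` i.i.d. `N(0, v)` weights and `k` i.i.d. `Uniform[0,1]`
biases, independent of each other. -/
noncomputable def rnnMeasure (k : ℕ) (v : ℝ≥0) :
    Measure ((Fin k → ℝ) × (Fin k → ℝ)) :=
  (Measure.pi fun _ => gaussianReal 0 v).prod
    (Measure.pi fun _ => volume.restrict (Set.Icc (0:ℝ) 1))

lemma clip_lip (u v : ℝ) : |clip u - clip v| ≤ |u - v| := by
  unfold clip
  refine (abs_min_sub_min_le_max _ _ _ _).trans ?_
  exact max_le (abs_max_sub_max_le_abs _ _ _) (by simp [abs_nonneg])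

lemma not_liYorke {f : ℝ → ℝ} (hf : ∀ x y, |f x - f y| ≤ |x - y|) :
    ¬ LiYorkeChaotic f := by
  rintro ⟨S, -, hunc, hS⟩
  have hinf : S.Infinite := fun h => hunc h.countable
  obtain ⟨x, hx, y, hy, hxy⟩ := hinf.nontrivial
  obtain ⟨h0, hpos⟩ := hS x hx y hy hxy
  set u : ℕ → ℝ := fun n => |f^[n] x - f^[n] y| with hu
  have hanti : Antitone u := antitone_nat_of_succ_le fun n => by
    simpa [hu, Function.iterate_succ_apply'] using hf (f^[n] x) (f^[n] y)
  have hbdd : BddBelow (Set.range u) := ⟨0, by rintro r ⟨n, rfl⟩; exact abs_nonneg _⟩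
  have hlim : Tendsto u atTop (nhds (⨅ n, u n)) := tendsto_atTop_ciInf hanti hbdd
  have h1 := hlim.liminf_eq
  have h2 := hlim.limsup_eq
  rw [h1] at h0
  rw [h2, h0] at hpos
  exact lt_irrefl 0 hpos

lemma integral_if_le {c x y : ℝ} (hxy : x ≤ y) (A : ℝ) :
    ∫ t in x..y, (if c ≤ t then A else 0) = A * (max (y - c) 0 - max (x - c) 0) := by
  have hfun : (fun t => if c ≤ t then A else 0) = (Set.Ici c).indicator (fun _ => A) := by
    ext t; simp [Set.indicator, Set.mem_Ici]
  rw [intervalIntegral.integral_of_le hxy, hfun,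
    MeasureTheory.setIntegral_indicator measurableSet_Ici]
  rcases le_or_gt c x with h | h
  · have hset : Set.Ioc x y ∩ Set.Ici c = Set.Ioc x y := by
      ext t; simp only [Set.mem_inter_iff, Set.mem_Ioc, Set.mem_Ici]
      exact ⟨fun ht => ht.1, fun ht => ⟨ht, le_trans h ht.1.le⟩⟩
    rw [hset]
    simp only [MeasureTheory.setIntegral_const, smul_eq_mul, Real.volume_Ioc]
    rw [measureReal_def, Real.volume_Ioc, ENNReal.toReal_ofReal (by linarith)]
    rw [max_eq_left (by linarith), max_eq_left (by linarith)]
    ring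
  · rcases le_or_gt c y with h2 | h2
    · have hset : Set.Ioc x y ∩ Set.Ici c = Set.Icc c y := by
        ext t; simp only [Set.mem_inter_iff, Set.mem_Ioc, Set.mem_Icc, Set.mem_Ici]
        constructor
        · rintro ⟨⟨-, h2⟩, h3⟩; exact ⟨h3, h2⟩
        · rintro ⟨h1, h3⟩; exact ⟨⟨lt_of_lt_of_le h h1, h3⟩, h1⟩
      rw [hset]
      simp only [MeasureTheory.setIntegral_const, smul_eq_mul, Real.volume_Icc]
      rw [measureReal_def, Real.volume_Icc, ENNReal.toReal_ofReal (by linarith)]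
      rw [max_eq_left (by linarith), max_eq_right (by linarith)]
      ring
    · have hset : Set.Ioc x y ∩ Set.Ici c = ∅ := by
        ext t; simp only [Set.mem_inter_iff, Set.mem_Ioc, Set.mem_Ici, Set.mem_empty_iff_false,
          iff_false, not_and]
        rintro ⟨-, h3⟩ h4; linarith
      rw [hset]
      rw [max_eq_right (by linarith), max_eq_right (by linarith)]
      simp

lemma rnnStep_lip {k : ℕ} (a b : Fin k → ℝ)
    (hS : ∀ t : ℝ, |∑ i ∈ Finset.univ.filter (fun i => b i ≤ t), a i| ≤ 1) :
    ∀ x y, |rnnStep a b x - rnnStep a b y| ≤ |x - y| := by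
  -- first, the inner map
  have key : ∀ x y : ℝ, x ≤ y →
      |(∑ i, a i * max (y - b i) 0) - (∑ i, a i * max (x - b i) 0)| ≤ |y - x| := by
    intro x y hxy
    have hint : ∀ i : Fin k, IntervalIntegrable (fun t => if b i ≤ t then a i else 0)
        volume x y := by
      intro i
      have : (fun t => if b i ≤ t then a i else 0) = (Set.Ici (b i)).indicator (fun _ => a i) := by
        ext t; simp [Set.indicator, Set.mem_Ici]
      rw [this, intervalIntegrable_iff]
      exact (integrableOn_const (by rw [Set.uIoc]; exact measure_Ioc_lt_top.ne)).indicator measurableSet_Ici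
    have heq : (∑ i, a i * max (y - b i) 0) - (∑ i, a i * max (x - b i) 0)
        = ∫ t in x..y, ∑ i, (if b i ≤ t then a i else 0) := by
      rw [intervalIntegral.integral_finset_sum (fun i _ => hint i)]
      rw [← Finset.sum_sub_distrib]
      refine Finset.sum_congr rfl fun i _ => ?_
      rw [integral_if_le hxy]
      ring
    rw [heq]
    have hb : ∀ t ∈ Set.uIoc x y, ‖∑ i, (if b i ≤ t then a i else 0)‖ ≤ 1 := by
      intro t _
      have := hS t
      rwa [Finset.sum_filter] at this
    calc |∫ t in x..y, ∑ i, (if b i ≤ t then a i else 0)| ≤ 1 * |y - x| :=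
          intervalIntegral.norm_integral_le_of_norm_le_const hb
      _ = |y - x| := one_mul _
  intro x y
  rcases le_total x y with h | h
  · have := key x y h
    unfold rnnStep
    have h2 := clip_lip (∑ i, a i * max (x - b i) 0) (∑ i, a i * max (y - b i) 0)
    rw [abs_sub_comm x y]
    exact h2.trans (by rwa [abs_sub_comm])
  · have := key y x h
    unfold rnnStep
    have h2 := clip_lip (∑ i, a i * max (x - b i) 0) (∑ i, a i * max (y - b i) 0)
    exact h2.trans (by rwa [abs_sub_comm] at this ⊢)

lemma not_chaotic_of_prefix {k : ℕ} (a b : Fin k → ℝ)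
    (h : ∀ j : Fin k, |∑ i ∈ Finset.univ.filter (fun i => b i ≤ b j), a i| ≤ 1) :
    ¬ LiYorkeChaotic (rnnStep a b) := by
  apply not_liYorke
  apply rnnStep_lip
  intro t
  set F := Finset.univ.filter (fun i => b i ≤ t) with hF
  rcases Finset.eq_empty_or_nonempty F with he | hne
  · rw [he]; simp
  · obtain ⟨j, hjF, hjmax⟩ := Finset.exists_max_image F b hne
    have hjt : b j ≤ t := (Finset.mem_filter.mp hjF).2
    have : F = Finset.univ.filter (fun i => b i ≤ b j) := by
      ext i
      simp only [hF, Finset.mem_filter, Finset.mem_univ, true_and]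
      exact ⟨fun hi => hjmax i (Finset.mem_filter.mpr ⟨Finset.mem_univ i, hi⟩),
        fun hi => le_trans hi hjt⟩
    rw [this]
    exact h j

lemma gaussianPDFReal_conv {v w : ℝ≥0} (hv : v ≠ 0) (hw : w ≠ 0) (z : ℝ) :
    ∫ x, gaussianPDFReal 0 v x * gaussianPDFReal 0 w (z - x)
      = gaussianPDFReal 0 (v + w) z := by
  have hv' : 0 < (v : ℝ) := lt_of_le_of_ne v.coe_nonneg (by exact_mod_cast Ne.symm hv)
  have hw' : 0 < (w : ℝ) := lt_of_le_of_ne w.coe_nonneg (by exact_mod_cast Ne.symm hw)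
  set A : ℝ := ((v : ℝ) + w) / (2 * v * w) with hA
  set c : ℝ := (v : ℝ) * z / (v + w) with hc
  have hApos : 0 < A := by positivity
  have key : ∀ x : ℝ, gaussianPDFReal 0 v x * gaussianPDFReal 0 w (z - x)
      = ((√(2*π*v))⁻¹ * (√(2*π*w))⁻¹ * rexp (- z^2 / (2*((v:ℝ)+w))))
        * rexp (-A * (x - c)^2) := by
    intro x
    unfold gaussianPDFReal
    have hexp : rexp (-(x - 0) ^ 2 / (2 * v)) * rexp (-(z - x - 0) ^ 2 / (2 * w))
        = rexp (- z^2 / (2*((v:ℝ)+w))) * rexp (-A * (x - c)^2) := by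
      rw [← Real.exp_add, ← Real.exp_add]
      congr 1
      rw [hA, hc]
      field_simp
      ring
    calc (√(2*π*v))⁻¹ * rexp (-(x - 0) ^ 2 / (2 * v))
        * ((√(2*π*w))⁻¹ * rexp (-(z - x - 0) ^ 2 / (2 * w)))
        = (√(2*π*v))⁻¹ * (√(2*π*w))⁻¹
          * (rexp (-(x - 0) ^ 2 / (2 * v)) * rexp (-(z - x - 0) ^ 2 / (2 * w))) := by ring
      _ = _ := by rw [hexp]; ring
  have : ∫ x, gaussianPDFReal 0 v x * gaussianPDFReal 0 w (z - x)
      = ((√(2*π*v))⁻¹ * (√(2*π*w))⁻¹ * rexp (- z^2 / (2*((v:ℝ)+w))))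
        * ∫ x, rexp (-A * (x - c)^2) := by
    rw [← integral_const_mul]
    exact integral_congr_ae (ae_of_all _ key)
  rw [this]
  have hsub : ∫ x, rexp (-A * (x - c)^2) = ∫ x, rexp (-A * x^2) :=
    integral_sub_right_eq_self (fun t => rexp (-A * t^2)) c
  rw [hsub, integral_gaussian]
  have hconst : (√(2*π*v))⁻¹ * (√(2*π*w))⁻¹ * √(π / A) = (√(2*π*((v:ℝ)+w)))⁻¹ := by
    rw [← Real.sqrt_inv, ← Real.sqrt_inv, ← Real.sqrt_mul (by positivity),
      ← Real.sqrt_mul (by positivity), ← Real.sqrt_inv]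
    congr 1
    rw [hA]
    field_simp
  unfold gaussianPDFReal
  push_cast
  rw [sub_zero]
  calc (√(2*π*v))⁻¹ * (√(2*π*w))⁻¹ * rexp (- z^2 / (2*((v:ℝ)+w))) * √(π / A)
      = ((√(2*π*v))⁻¹ * (√(2*π*w))⁻¹ * √(π / A)) * rexp (- z^2 / (2*((v:ℝ)+w))) := by ring
    _ = _ := by rw [hconst]

lemma gaussianPDFReal_le (v : ℝ≥0) (x : ℝ) : gaussianPDFReal 0 v x ≤ (√(2*π*v))⁻¹ := by
  unfold gaussianPDFReal
  have h1 : rexp (-(x - 0)^2 / (2*v)) ≤ 1 := by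
    rw [Real.exp_le_one_iff]
    rw [neg_div]
    exact neg_nonpos.mpr (by positivity)
  have h2 : (0:ℝ) ≤ (√(2*π*v))⁻¹ := by positivity
  calc (√(2*π*v))⁻¹ * rexp (-(x - 0)^2 / (2*v)) ≤ (√(2*π*v))⁻¹ * 1 :=
        mul_le_mul_of_nonneg_left h1 h2
    _ = _ := mul_one _

lemma integrable_conv_integrand {v w : ℝ≥0} (z : ℝ) :
    Integrable (fun x => gaussianPDFReal 0 v x * gaussianPDFReal 0 w (z - x)) := by
  have hint : Integrable (fun x => gaussianPDFReal 0 w (z - x)) :=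
    (integrable_gaussianPDFReal 0 w).comp_sub_left z
  exact hint.bdd_mul (measurable_gaussianPDFReal 0 v).aestronglyMeasurable
    (c := (√(2*π*v))⁻¹) (ae_of_all _ fun x => by
      rw [Real.norm_eq_abs, abs_of_nonneg (gaussianPDFReal_nonneg 0 v x)]
      exact gaussianPDFReal_le v x)

lemma gaussianPDF_conv {v w : ℝ≥0} (hv : v ≠ 0) (hw : w ≠ 0) (z : ℝ) :
    ∫⁻ x, gaussianPDF 0 v x * gaussianPDF 0 w (z - x) = gaussianPDF 0 (v + w) z := by
  unfold gaussianPDF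
  simp_rw [← ENNReal.ofReal_mul (gaussianPDFReal_nonneg 0 v _)]
  rw [← ofReal_integral_eq_lintegral_ofReal (integrable_conv_integrand z)
    (ae_of_all _ fun x => mul_nonneg (gaussianPDFReal_nonneg _ _ _)
      (gaussianPDFReal_nonneg _ _ _)), gaussianPDFReal_conv hv hw z]

lemma gaussianReal_conv (v w : ℝ≥0) :
    Measure.map (fun p : ℝ × ℝ => p.1 + p.2) ((gaussianReal 0 v).prod (gaussianReal 0 w))
      = gaussianReal 0 (v + w) := by
  by_cases hv : v = 0
  · subst hv
    rw [gaussianReal_zero_var, Measure.dirac_prod,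
      Measure.map_map measurable_add measurable_prodMk_left]
    have : ((fun p : ℝ × ℝ => p.1 + p.2) ∘ (Prod.mk (0:ℝ))) = id := by funext y; simp
    rw [this, Measure.map_id, zero_add]
  by_cases hw : w = 0
  · subst hw
    rw [gaussianReal_zero_var, Measure.prod_dirac,
      Measure.map_map measurable_add measurable_prodMk_right]
    have : ((fun p : ℝ × ℝ => p.1 + p.2) ∘ (fun x : ℝ => (x, (0:ℝ)))) = id := by
      funext y; simp
    rw [this, Measure.map_id, add_zero]
  have hvw : v + w ≠ 0 := fun h => hv (add_eq_zero.mp h).1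
  ext s hs
  rw [Measure.map_apply measurable_add hs,
    gaussianReal_of_var_ne_zero _ hv, gaussianReal_of_var_ne_zero _ hw,
    gaussianReal_of_var_ne_zero _ hvw,
    Measure.prod_apply (hs.preimage measurable_add)]
  have hslice : ∀ x : ℝ,
      (volume.withDensity (gaussianPDF 0 w))
        (Prod.mk x ⁻¹' ((fun p : ℝ × ℝ => p.1 + p.2) ⁻¹' s))
      = ∫⁻ z in s, gaussianPDF 0 w (z - x) := by
    intro x
    have hpre : Prod.mk x ⁻¹' ((fun p : ℝ × ℝ => p.1 + p.2) ⁻¹' s)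
        = (fun y => x + y) ⁻¹' s := rfl
    rw [hpre, withDensity_apply _ (hs.preimage (measurable_const_add x))]
    have hmap : ∫⁻ z in s, gaussianPDF 0 w (z - x) ∂volume
        = ∫⁻ z in s, gaussianPDF 0 w (z - x) ∂(Measure.map (fun y => x + y) volume) := by
      rw [map_add_left_eq_self]
    have hm1 : Measurable fun z : ℝ => gaussianPDF 0 w (z - x) := by
      exact (measurable_gaussianPDF 0 w).comp (measurable_sub_const x)
    rw [hmap, setLIntegral_map hs hm1 (measurable_const_add x)]
    simp
  simp_rw [hslice]
  have hginner : Measurable fun x => ∫⁻ z in s, gaussianPDF 0 w (z - x) := by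
    apply Measurable.lintegral_prod_right (f := fun x z => gaussianPDF 0 w (z - x))
    exact (measurable_gaussianPDF 0 w).comp (measurable_snd.sub measurable_fst)
  rw [lintegral_withDensity_eq_lintegral_mul _ (measurable_gaussianPDF 0 v) hginner]
  have hmul : ∀ x : ℝ, (gaussianPDF 0 v * fun x => ∫⁻ z in s, gaussianPDF 0 w (z - x)) x
      = ∫⁻ z in s, gaussianPDF 0 v x * gaussianPDF 0 w (z - x) := by
    intro x
    have hm1 : Measurable fun z : ℝ => gaussianPDF 0 w (z - x) := by
      exact (measurable_gaussianPDF 0 w).comp (measurable_sub_const x)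
    simp only [Pi.mul_apply]
    rw [← lintegral_const_mul _ hm1]
  simp_rw [hmul]
  rw [lintegral_lintegral_swap]
  · simp_rw [gaussianPDF_conv hv hw]
    rw [withDensity_apply _ hs]
  · have : Measurable (Function.uncurry fun x z => gaussianPDF 0 v x * gaussianPDF 0 w (z - x)) := by
      show Measurable ((fun p : ℝ × ℝ => gaussianPDF 0 v p.1) * (fun p : ℝ × ℝ => gaussianPDF 0 w (p.2 - p.1)))
      apply Measurable.mul
      · exact (measurable_gaussianPDF 0 v).comp measurable_fst
      · exact (measurable_gaussianPDF 0 w).comp (measurable_snd.sub measurable_fst)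
    exact this.aemeasurable

lemma sum_split {M : Type*} [AddCommMonoid M] {m : ℕ} (T : Finset (Fin (m+1)))
    (g : Fin (m+1) → M) :
    ∑ i ∈ T, g i = (if (0 : Fin (m+1)) ∈ T then g 0 else 0)
      + ∑ j ∈ Finset.univ.filter (fun j : Fin m => j.succ ∈ T), g j.succ := by
  have h1 : ∑ i ∈ T, g i = ∑ i : Fin (m+1), if i ∈ T then g i else 0 := by
    rw [Finset.sum_ite_mem, Finset.univ_inter]
  rw [h1, Fin.sum_univ_succ, Finset.sum_filter]

lemma map_sum_pi_gaussian (v : ℝ≥0) :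
    ∀ (m : ℕ) (T : Finset (Fin m)),
      Measure.map (fun a : Fin m → ℝ => ∑ i ∈ T, a i)
        (Measure.pi fun _ => gaussianReal 0 v) = gaussianReal 0 (T.card • v) := by
  intro m
  induction m with
  | zero =>
    intro T
    have hT : T = ∅ := Finset.eq_empty_of_forall_notMem (fun x => x.elim0)
    subst hT
    simp only [Finset.sum_empty, Finset.card_empty, zero_smul]
    rw [Measure.map_const, measure_univ, one_smul, gaussianReal_zero_var]
  | succ m ih =>
    intro T
    have hmp := measurePreserving_piFinSuccAbove (fun _ : Fin (m+1) => gaussianReal 0 v) 0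
    set e := MeasurableEquiv.piFinSuccAbove (fun _ : Fin (m+1) => ℝ) 0 with he
    set T' : Finset (Fin m) := Finset.univ.filter (fun j : Fin m => j.succ ∈ T) with hT'
    have hS : Measurable fun y : Fin m → ℝ => ∑ j ∈ T', y j :=
      Finset.measurable_sum T' (fun j _ => measurable_pi_apply j)
    have hcard : T.card = (if (0 : Fin (m+1)) ∈ T then 1 else 0) + T'.card := by
      have h2 := sum_split (M := ℕ) T (fun _ => 1)
      rw [Finset.card_eq_sum_ones T, Finset.card_eq_sum_ones T', hT', h2]
    by_cases h0 : (0 : Fin (m+1)) ∈ T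
    · have hfac : (fun a : Fin (m+1) → ℝ => ∑ i ∈ T, a i)
          = ((fun p : ℝ × ℝ => p.1 + p.2)
              ∘ (Prod.map id (fun y : Fin m → ℝ => ∑ j ∈ T', y j))) ∘ e := by
        funext a
        simp only [Function.comp_apply, he, MeasurableEquiv.piFinSuccAbove_apply, Prod.map]
        rw [sum_split T a]
        simp [h0, Fin.zero_succAbove, Fin.tail, hT', id]
      rw [hfac, ← Measure.map_map (measurable_add.comp (measurable_id.prodMap hS))
          e.measurable, hmp.map_eq,
        ← Measure.map_map measurable_add (measurable_id.prodMap hS),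
        ← Measure.map_prod_map _ _ measurable_id hS,
        Measure.map_id, ih T', gaussianReal_conv]
      congr 1
      rw [hcard, if_pos h0, add_nsmul, one_nsmul]
    · have hfac : (fun a : Fin (m+1) → ℝ => ∑ i ∈ T, a i)
          = ((fun y : Fin m → ℝ => ∑ j ∈ T', y j) ∘ Prod.snd) ∘ e := by
        funext a
        simp only [Function.comp_apply, he, MeasurableEquiv.piFinSuccAbove_apply]
        rw [sum_split T a]
        simp [h0, Fin.zero_succAbove, Fin.tail, hT']
      rw [hfac, ← Measure.map_map (hS.comp measurable_snd) e.measurable, hmp.map_eq,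
        ← Measure.map_map hS measurable_snd,
        Measure.map_snd_prod, measure_univ, one_smul, ih T']
      congr 1
      rw [hcard, if_neg h0, zero_add]

lemma integral_Ioi_x_pdf {V : ℝ≥0} (hV : V ≠ 0) :
    ∫ x in Set.Ioi (1:ℝ), x * gaussianPDFReal 0 V x
      = Real.sqrt (V / (2*π)) * rexp (-1/(2*(V:ℝ))) := by
  have hV' : 0 < (V : ℝ) := lt_of_le_of_ne V.coe_nonneg (by exact_mod_cast Ne.symm hV)
  set C : ℝ := (√(2*π*V))⁻¹ with hC
  have hfun : ∀ x : ℝ, x * gaussianPDFReal 0 V x = C * (x * rexp (-(2*(V:ℝ))⁻¹ * x^2)) := by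
    intro x
    unfold gaussianPDFReal
    rw [hC, sub_zero]
    have h : -x^2/(2*(V:ℝ)) = -(2*(V:ℝ))⁻¹ * x^2 := by field_simp
    rw [← h]
    ring
  have hF : ∀ x ∈ Set.Ioi (1:ℝ), HasDerivAt (fun x : ℝ => -(V:ℝ) * rexp (-(2*(V:ℝ))⁻¹ * x^2))
      (x * rexp (-(2*(V:ℝ))⁻¹ * x^2)) x := by
    intro x _
    have h1 : HasDerivAt (fun x : ℝ => -(2*(V:ℝ))⁻¹ * x^2) (-(2*(V:ℝ))⁻¹ * (2*x)) x := by
      simpa using ((hasDerivAt_pow 2 x).const_mul (-(2*(V:ℝ))⁻¹))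
    have h2 := (h1.exp).const_mul (-(V:ℝ))
    refine h2.congr_deriv ?_
    have hV0 : (V:ℝ) ≠ 0 := hV'.ne'
    have e : (V:ℝ) * (2*(V:ℝ))⁻¹ = 2⁻¹ := by field_simp
    linear_combination (2 * x * rexp (-(2*(V:ℝ))⁻¹ * x^2)) * e
  have hint : IntegrableOn (fun x : ℝ => x * rexp (-(2*(V:ℝ))⁻¹ * x^2)) (Set.Ioi 1) := by
    have h := integrable_mul_exp_neg_mul_sq (b := (2*(V:ℝ))⁻¹) (by positivity)
    exact h.integrableOn
  have htend : Tendsto (fun x : ℝ => -(V:ℝ) * rexp (-(2*(V:ℝ))⁻¹ * x^2)) atTop (nhds 0) := by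
    have h1 : Tendsto (fun x : ℝ => -(2*(V:ℝ))⁻¹ * x^2) atTop atBot := by
      apply Tendsto.const_mul_atTop_of_neg (show -(2*(V:ℝ))⁻¹ < 0 by
        simp only [neg_lt, neg_zero]; positivity) (tendsto_pow_atTop two_ne_zero)
    have h2 := Real.tendsto_exp_atBot.comp h1
    have h3 := h2.const_mul (-(V:ℝ))
    simpa using h3
  have hFTC := integral_Ioi_of_hasDerivAt_of_tendsto
    (f := fun x : ℝ => -(V:ℝ) * rexp (-(2*(V:ℝ))⁻¹ * x^2))
    (f' := fun x : ℝ => x * rexp (-(2*(V:ℝ))⁻¹ * x^2))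
    (Continuous.continuousWithinAt (by continuity)) hF hint htend
  have hCV : C * (V:ℝ) = Real.sqrt ((V:ℝ) / (2*π)) := by
    have h5 : (V:ℝ)/(2*π) = (V:ℝ)^2/(2*π*(V:ℝ)) := by field_simp
    rw [h5, Real.sqrt_div (sq_nonneg _), Real.sqrt_sq hV'.le, hC]
    rw [div_eq_mul_inv, mul_comm]
  calc ∫ x in Set.Ioi (1:ℝ), x * gaussianPDFReal 0 V x
      = C * ∫ x in Set.Ioi (1:ℝ), x * rexp (-(2*(V:ℝ))⁻¹ * x^2) := by
        rw [← MeasureTheory.integral_const_mul]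
        exact setIntegral_congr_ae measurableSet_Ioi (ae_of_all _ fun x _ => hfun x)
    _ = C * ((V:ℝ) * rexp (-(2*(V:ℝ))⁻¹ * 1^2)) := by rw [hFTC]; ring_nf
    _ = (C * (V:ℝ)) * rexp (-1/(2*(V:ℝ))) := by
        have h4 : -(2*(V:ℝ))⁻¹ * 1^2 = -1/(2*(V:ℝ)) := by field_simp
        rw [h4]; ring
    _ = _ := by rw [hCV]

lemma gaussian_Ioi_tail {V : ℝ≥0} (hV : V ≠ 0) :
    gaussianReal 0 V (Set.Ioi 1)
      ≤ ENNReal.ofReal (Real.sqrt (V / (2*π)) * rexp (-1/(2*(V:ℝ)))) := by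
  rw [gaussianReal_apply 0 hV]
  have hmono : ∫⁻ x in Set.Ioi (1:ℝ), gaussianPDF 0 V x
      ≤ ∫⁻ x in Set.Ioi (1:ℝ), ENNReal.ofReal (x * gaussianPDFReal 0 V x) := by
    apply setLIntegral_mono (by
      exact (measurable_id.mul (measurable_gaussianPDFReal 0 V)).ennreal_ofReal)
    intro x hx
    unfold gaussianPDF
    apply ENNReal.ofReal_le_ofReal
    have h1 : (1:ℝ) ≤ x := le_of_lt hx
    nlinarith [gaussianPDFReal_nonneg 0 V x]
  refine hmono.trans ?_
  have hint : IntegrableOn (fun x : ℝ => x * gaussianPDFReal 0 V x) (Set.Ioi 1) := by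
    have hV' : 0 < (V : ℝ) := lt_of_le_of_ne V.coe_nonneg (by exact_mod_cast Ne.symm hV)
    have h := integrable_mul_exp_neg_mul_sq (b := (2*(V:ℝ))⁻¹) (by positivity)
    have h2 := (h.const_mul ((√(2*π*V))⁻¹)).integrableOn (s := Set.Ioi 1)
    apply h2.congr_fun ?_ measurableSet_Ioi
    intro x _
    simp only [gaussianPDFReal, sub_zero]
    have hh : -x^2/(2*(V:ℝ)) = -(2*(V:ℝ))⁻¹ * x^2 := by field_simp
    rw [hh]; ring
  rw [← ofReal_integral_eq_lintegral_ofReal hint ?nn]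
  case nn =>
    filter_upwards [ae_restrict_mem measurableSet_Ioi] with x hx
    have h1 : (0:ℝ) < x := lt_trans one_pos hx
    exact mul_nonneg h1.le (gaussianPDFReal_nonneg 0 V x)
  rw [integral_Ioi_x_pdf hV]

lemma gaussian_abs_tail {V : ℝ≥0} (hV : V ≠ 0) :
    gaussianReal 0 V {x : ℝ | 1 < |x|}
      ≤ ENNReal.ofReal (2 * (Real.sqrt (V / (2*π)) * rexp (-1/(2*(V:ℝ))))) := by
  have hsplit : {x : ℝ | 1 < |x|} = Set.Iio (-1) ∪ Set.Ioi 1 := by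
    ext x
    simp only [Set.mem_setOf_eq, Set.mem_union, Set.mem_Iio, Set.mem_Ioi, lt_abs, lt_neg]
    tauto
  rw [hsplit]
  have hneg : gaussianReal 0 V (Set.Iio (-1)) = gaussianReal 0 V (Set.Ioi 1) := by
    have hmap := gaussianReal_map_const_mul (μ := 0) (v := V) (-1)
    have h1 : (NNReal.mk ((-1:ℝ)^2) (sq_nonneg _)) = 1 := by
      ext; norm_num
    rw [h1, one_mul, mul_zero] at hmap
    calc gaussianReal 0 V (Set.Iio (-1))
        = (Measure.map (fun x : ℝ => -1 * x) (gaussianReal 0 V)) (Set.Iio (-1)) := by rw [hmap]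
      _ = gaussianReal 0 V ((fun x : ℝ => -1 * x) ⁻¹' Set.Iio (-1)) := by
          rw [Measure.map_apply (measurable_const_mul _) measurableSet_Iio]
      _ = gaussianReal 0 V (Set.Ioi 1) := by
          congr 1
          ext x
          simp only [Set.mem_preimage, Set.mem_Iio, Set.mem_Ioi]
          constructor <;> intro h <;> linarith
  calc gaussianReal 0 V (Set.Iio (-1) ∪ Set.Ioi 1)
      ≤ gaussianReal 0 V (Set.Iio (-1)) + gaussianReal 0 V (Set.Ioi 1) := measure_union_le _ _
    _ = gaussianReal 0 V (Set.Ioi 1) + gaussianReal 0 V (Set.Ioi 1) := by rw [hneg]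
    _ ≤ ENNReal.ofReal (Real.sqrt (V / (2*π)) * rexp (-1/(2*(V:ℝ))))
        + ENNReal.ofReal (Real.sqrt (V / (2*π)) * rexp (-1/(2*(V:ℝ)))) :=
          add_le_add (gaussian_Ioi_tail hV) (gaussian_Ioi_tail hV)
    _ = _ := by
        rw [← ENNReal.ofReal_add (by positivity) (by positivity)]
        congr 1
        ring

lemma numeric_bound {k m : ℕ} (hk : 2 ≤ k) (hm1 : 1 ≤ m) (hmk : m ≤ k)
    {V : ℝ} (hV : V = m * (1 / (4 * k * Real.log k))) :
    2 * (Real.sqrt (V / (2*π)) * rexp (-1/(2*V))) ≤ 1/(2*(k:ℝ)^2) := by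
  have hk0 : (2:ℝ) ≤ (k:ℝ) := by exact_mod_cast hk
  have hkpos : (0:ℝ) < k := by linarith
  have hL2 : (0.6931471803:ℝ) < Real.log 2 := Real.log_two_gt_d9
  have hL : Real.log 2 ≤ Real.log k := Real.log_le_log (by norm_num) hk0
  set L := Real.log k with hLdef
  have hL0 : (0:ℝ) < L := by linarith
  have hm0 : (0:ℝ) < m := by exact_mod_cast hm1
  have hmk' : (m:ℝ) ≤ k := by exact_mod_cast hmk
  have hVpos : 0 < V := by rw [hV]; positivity
  have hVle : V ≤ 1/(4*L) := by
    have h1 : (m:ℝ) * (1/(4*k*L)) ≤ (k:ℝ) * (1/(4*(k:ℝ)*L)) :=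
      mul_le_mul_of_nonneg_right hmk' (by positivity)
    have h2 : (k:ℝ) * (1/(4*(k:ℝ)*L)) = 1/(4*L) := by
      field_simp
    rw [hV]; rw [h2] at h1; exact h1
  have hExp : rexp (-1/(2*V)) ≤ ((k:ℝ)^2)⁻¹ := by
    have h2V : 2*V ≤ 1/(2*L) := by
      have : 2*V ≤ 2*(1/(4*L)) := by linarith
      have h3 : 2*(1/(4*L)) = 1/(2*L) := by field_simp; ring
      linarith
    have h4 : 2*L ≤ 1/(2*V) := by
      rw [le_div_iff₀ (by positivity)]
      calc 2*L*(2*V) ≤ 2*L*(1/(2*L)) := by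
            apply mul_le_mul_of_nonneg_left h2V (by positivity)
        _ = 1 := by field_simp
    have h1 : -1/(2*V) ≤ -(2*L) := by
      rw [neg_div]
      exact neg_le_neg h4
    calc rexp (-1/(2*V)) ≤ rexp (-(2*L)) := Real.exp_le_exp.mpr h1
      _ = ((k:ℝ)^2)⁻¹ := by
          rw [show -(2*L) = -(L+L) by ring, Real.exp_neg, Real.exp_add,
            hLdef, Real.exp_log hkpos, sq]
  have hSqrt : Real.sqrt (V/(2*π)) ≤ 1/4 := by
    have hπ : (3.141592:ℝ) < π := Real.pi_gt_d6
    have hx : V/(2*π) ≤ 1/16 := by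
      have h1 : V/(2*π) ≤ (1/(4*L))/(2*π) :=
        by gcongr
      have h2 : (1/(4*L))/(2*π) = 1/(8*π*L) := by field_simp; ring
      have h3 : (16:ℝ) ≤ 8*π*L := by nlinarith
      have h4 : 1/(8*π*L) ≤ 1/16 := by
        apply one_div_le_one_div_of_le (by norm_num) h3
      rw [h2] at h1; linarith
    calc Real.sqrt (V/(2*π)) ≤ Real.sqrt (1/16) := Real.sqrt_le_sqrt hx
      _ = 1/4 := by
          rw [show (1/16:ℝ) = (1/4)^2 by norm_num, Real.sqrt_sq (by norm_num)]
  have hfin : 2 * (Real.sqrt (V / (2*π)) * rexp (-1/(2*V)))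
      ≤ 2 * ((1/4) * ((k:ℝ)^2)⁻¹) := by
    apply mul_le_mul_of_nonneg_left _ (by norm_num)
    exact mul_le_mul hSqrt hExp (Real.exp_nonneg _) (by norm_num)
  calc 2 * (Real.sqrt (V / (2*π)) * rexp (-1/(2*V))) ≤ 2 * ((1/4) * ((k:ℝ)^2)⁻¹) := hfin
    _ = 1/(2*(k:ℝ)^2) := by field_simp; ring

/-- **Low variance, order.** With weights i.i.d. `N(0, 1/(4 k log k))` and biases
i.i.d. `Uniform[0,1]`, the probability that the RNN step map is Li-Yorke chaotic
is at most `1/k`. -/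
theorem low_variance_order (k : ℕ) (hk : 2 ≤ k) :
    rnnMeasure k ((1 / (4 * k * Real.log k)).toNNReal)
        {p | LiYorkeChaotic (rnnStep p.1 p.2)} ≤ 1 / (k : ℝ≥0∞) := by
  set v : ℝ≥0 := (1 / (4 * k * Real.log k)).toNNReal with hvdef
  have hk0 : (2:ℝ) ≤ (k:ℝ) := by exact_mod_cast hk
  have hkpos : (0:ℝ) < k := by linarith
  have hL2 : (0.6931471803:ℝ) < Real.log 2 := Real.log_two_gt_d9
  have hL : Real.log 2 ≤ Real.log k := Real.log_le_log (by norm_num) hk0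
  have hL0 : (0:ℝ) < Real.log k := by linarith
  have hvr : (v:ℝ) = 1 / (4 * k * Real.log k) := Real.coe_toNNReal _ (by positivity)
  have hvne : v ≠ 0 := by
    rw [hvdef]
    exact ne_of_gt (Real.toNNReal_pos.mpr (by positivity))
  have habs : MeasurableSet {x : ℝ | 1 < |x|} :=
    measurableSet_lt measurable_const measurable_abs
  set B : Fin k → Set ((Fin k → ℝ) × (Fin k → ℝ)) := fun j =>
    {p | 1 < |∑ i ∈ Finset.univ.filter (fun i => p.2 i ≤ p.2 j), p.1 i|} with hB
  have hBmeas : ∀ j, MeasurableSet (B j) := by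
    intro j
    have hsum : Measurable fun p : (Fin k → ℝ) × (Fin k → ℝ) =>
        ∑ i : Fin k, if p.2 i ≤ p.2 j then p.1 i else 0 := by
      apply Finset.measurable_sum
      intro i _
      apply Measurable.ite
      · exact measurableSet_le (by fun_prop) (by fun_prop)
      · exact (by fun_prop : Measurable fun p : (Fin k → ℝ) × (Fin k → ℝ) => p.1 i)
      · exact measurable_const
    have hBeq : B j = (fun p : (Fin k → ℝ) × (Fin k → ℝ) =>
        ∑ i : Fin k, if p.2 i ≤ p.2 j then p.1 i else 0) ⁻¹' {x : ℝ | 1 < |x|} := by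
      ext p
      simp only [hB, Set.mem_setOf_eq, Set.mem_preimage, Finset.sum_filter]
    rw [hBeq]
    exact hsum habs
  have hsub : {p : (Fin k → ℝ) × (Fin k → ℝ) | LiYorkeChaotic (rnnStep p.1 p.2)}
      ⊆ ⋃ j, B j := by
    intro p hp
    by_contra hmem
    simp only [Set.mem_iUnion, not_exists, hB, Set.mem_setOf_eq, not_lt] at hmem
    exact not_chaotic_of_prefix p.1 p.2 hmem hp
  have hBj : ∀ j, rnnMeasure k v (B j) ≤ ENNReal.ofReal (1/(2*(k:ℝ)^2)) := by
    intro j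
    rw [rnnMeasure, Measure.prod_apply_symm (hBmeas j)]
    have hslice : ∀ b : Fin k → ℝ,
        (Measure.pi fun _ : Fin k => gaussianReal 0 v) ((fun a => (a, b)) ⁻¹' B j)
          ≤ ENNReal.ofReal (1/(2*(k:ℝ)^2)) := by
      intro b
      set T := Finset.univ.filter (fun i => b i ≤ b j) with hT
      have hmeasS : Measurable fun a : Fin k → ℝ => ∑ i ∈ T, a i :=
        Finset.measurable_sum T fun i _ => measurable_pi_apply i
      have hpre : ((fun a : Fin k → ℝ => (a, b)) ⁻¹' B j)
          = (fun a : Fin k → ℝ => ∑ i ∈ T, a i) ⁻¹' {x : ℝ | 1 < |x|} := rfl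
      rw [hpre, ← Measure.map_apply hmeasS habs, map_sum_pi_gaussian v k T]
      have hcard1 : 1 ≤ T.card := Finset.card_pos.mpr ⟨j, by simp [hT]⟩
      have hcardk : T.card ≤ k := by
        calc T.card ≤ Finset.univ.card := Finset.card_filter_le _ _
          _ = k := by simp
      have hVne : T.card • v ≠ 0 := by
        rw [nsmul_eq_mul]
        exact mul_ne_zero (Nat.cast_ne_zero.mpr (by omega)) hvne
      refine (gaussian_abs_tail hVne).trans (ENNReal.ofReal_le_ofReal ?_)
      have hVcoe : ((T.card • v : ℝ≥0) : ℝ) = T.card * (1 / (4 * k * Real.log k)) := by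
        rw [NNReal.coe_nsmul, hvr, nsmul_eq_mul]
      exact numeric_bound hk hcard1 hcardk hVcoe
    calc ∫⁻ b, (Measure.pi fun _ : Fin k => gaussianReal 0 v) ((fun a => (a, b)) ⁻¹' B j)
          ∂(Measure.pi fun _ : Fin k => volume.restrict (Set.Icc (0:ℝ) 1))
        ≤ ∫⁻ _, ENNReal.ofReal (1/(2*(k:ℝ)^2))
          ∂(Measure.pi fun _ : Fin k => volume.restrict (Set.Icc (0:ℝ) 1)) :=
          lintegral_mono hslice
      _ = ENNReal.ofReal (1/(2*(k:ℝ)^2)) := by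
          rw [lintegral_const]
          have huniv : (Measure.pi fun _ : Fin k => volume.restrict (Set.Icc (0:ℝ) 1))
              Set.univ = 1 := by
            rw [Measure.pi_univ]
            simp [Real.volume_Icc]
          rw [huniv, mul_one]
  calc rnnMeasure k v {p | LiYorkeChaotic (rnnStep p.1 p.2)}
      ≤ rnnMeasure k v (⋃ j, B j) := measure_mono hsub
    _ ≤ ∑' j, rnnMeasure k v (B j) := measure_iUnion_le _
    _ = ∑ j : Fin k, rnnMeasure k v (B j) := tsum_fintype _
    _ ≤ ∑ _j : Fin k, ENNReal.ofReal (1/(2*(k:ℝ)^2)) := Finset.sum_le_sum fun j _ => hBj j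
    _ = (k : ℝ≥0∞) * ENNReal.ofReal (1/(2*(k:ℝ)^2)) := by
        rw [Finset.sum_const, Finset.card_univ, Fintype.card_fin, nsmul_eq_mul]
    _ ≤ 1 / (k : ℝ≥0∞) := by
        have h1 : (k:ℝ) * (1/(2*(k:ℝ)^2)) ≤ 1/(k:ℝ) := by
          rw [mul_one_div, div_le_div_iff₀ (by positivity) (by positivity)]
          nlinarith
        calc (k : ℝ≥0∞) * ENNReal.ofReal (1/(2*(k:ℝ)^2))
            = ENNReal.ofReal ((k:ℝ) * (1/(2*(k:ℝ)^2))) := by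
              rw [ENNReal.ofReal_mul (by positivity : (0:ℝ) ≤ (k:ℝ)), ENNReal.ofReal_natCast]
          _ ≤ ENNReal.ofReal (1/(k:ℝ)) := ENNReal.ofReal_le_ofReal h1
          _ = 1 / (k : ℝ≥0∞) := by
              rw [one_div, one_div, ← ENNReal.ofReal_natCast k,
                ENNReal.ofReal_inv_of_pos hkpos]
end

section
/- Let k ∈ ℕ, let 0 ≤ b_1 < b_2 < ⋯ < b_k ≤ 1 be real biases, let a ∈ ℝ^k be arbitrary weights, and for each i ∈ {1, …, k} set y_i = ∑_{ι=1}^{i−1} a_ι (b_i − b_ι). If there exist indices i < ℓ in {1, …, k} with y_i > 1 and y_ℓ < 0, then the RNN step map f_{a,b} has a point of period 3. -/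
open MeasureTheory ProbabilityTheory Filter Set
open scoped NNReal ENNReal

/-- `f` has a point of period 3 in `[0,1]`. -/
def HasPeriod3 (f : ℝ → ℝ) : Prop :=
  ∃ x ∈ Set.Icc (0:ℝ) 1, f (f (f x)) = x ∧ f x ≠ x

lemma rnnStep_continuous {k : ℕ} (a b : Fin k → ℝ) : Continuous (rnnStep a b) := by
  unfold rnnStep clip
  fun_prop

/-- A decreasing pullback lemma: if `f` is continuous on `[p,q]` with
`f p ≥ t` and `f q ≤ s`, then there is a subinterval `[u,v]` mapped into
`[s,t]` with `f u = t` and `f v = s`. -/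
lemma pullback_dec {f : ℝ → ℝ} (hf : Continuous f) {p q s t : ℝ}
    (hpq : p ≤ q) (hst : s ≤ t) (hfp : t ≤ f p) (hfq : f q ≤ s) :
    ∃ u v, p ≤ u ∧ u ≤ v ∧ v ≤ q ∧ f u = t ∧ f v = s ∧
      ∀ x ∈ Set.Icc u v, f x ∈ Set.Icc s t := by
  have hScpt : IsCompact (Set.Icc p q ∩ f ⁻¹' {s}) :=
    isCompact_Icc.inter_right (isClosed_singleton.preimage hf)
  have hSne : (Set.Icc p q ∩ f ⁻¹' {s}).Nonempty := by
    obtain ⟨x, hx, hfx⟩ := intermediate_value_Icc' hpq hf.continuousOn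
      (show s ∈ Set.Icc (f q) (f p) from ⟨hfq, hst.trans hfp⟩)
    exact ⟨x, hx, hfx⟩
  obtain ⟨v, ⟨hvmem, hvs⟩, hvmin⟩ := hScpt.exists_isLeast hSne
  simp only [Set.mem_preimage, Set.mem_singleton_iff] at hvs
  -- on [p,v], f ≥ s
  have hge : ∀ x ∈ Set.Icc p v, s ≤ f x := by
    rintro x ⟨hpx, hxv⟩
    by_contra hlt
    push_neg at hlt
    obtain ⟨z, ⟨hpz, hzx⟩, hfz⟩ := intermediate_value_Icc' hpx hf.continuousOn
      (show s ∈ Set.Icc (f x) (f p) from ⟨hlt.le, hst.trans hfp⟩)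
    have hzq : z ≤ q := le_trans (hzx.trans hxv) hvmem.2
    have := hvmin ⟨⟨hpz, hzq⟩, by simpa using hfz⟩
    have hx : x = z := le_antisymm (le_trans hxv this) hzx
    rw [hx, hfz] at hlt
    exact lt_irrefl _ hlt
  -- u := greatest point of [p,v] with f = t
  have hTcpt : IsCompact (Set.Icc p v ∩ f ⁻¹' {t}) :=
    isCompact_Icc.inter_right (isClosed_singleton.preimage hf)
  have hTne : (Set.Icc p v ∩ f ⁻¹' {t}).Nonempty := by
    obtain ⟨x, hx, hfx⟩ := intermediate_value_Icc' hvmem.1 hf.continuousOn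
      (show t ∈ Set.Icc (f v) (f p) from ⟨hvs ▸ hst, hfp⟩)
    exact ⟨x, hx, hfx⟩
  obtain ⟨u, ⟨humem, hut⟩, humax⟩ := hTcpt.exists_isGreatest hTne
  simp only [Set.mem_preimage, Set.mem_singleton_iff] at hut
  have hle : ∀ x ∈ Set.Icc u v, f x ≤ t := by
    rintro x ⟨hux, hxv⟩
    by_contra hlt
    push_neg at hlt
    obtain ⟨z, ⟨hxz, hzv⟩, hfz⟩ := intermediate_value_Icc' hxv hf.continuousOn
      (show t ∈ Set.Icc (f v) (f x) from ⟨hvs ▸ hst, hlt.le⟩)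
    have := humax ⟨⟨humem.1.trans (hux.trans hxz), hzv⟩, by simpa using hfz⟩
    have hx : x = z := le_antisymm hxz (this.trans hux)
    rw [hx, hfz] at hlt
    exact lt_irrefl _ hlt
  refine ⟨u, v, humem.1, humem.2, hvmem.2, hut, hvs, ?_⟩
  intro x hx
  exact ⟨hge x ⟨humem.1.trans hx.1, hx.2⟩, hle x hx⟩

/-- Core topological lemma: a continuous self-map with `f 0 = 0`, `f bi = 1`,
`f bl = 0` for `0 ≤ bi < bl ≤ 1` has a point of period 3. -/
lemma period3_aux {f : ℝ → ℝ} (hf : Continuous f) {bi bl : ℝ}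
    (hbi0 : 0 ≤ bi) (hbil : bi < bl) (hbl1 : bl ≤ 1)
    (hfi : f bi = 1) (hfl : f bl = 0) (hf0 : f 0 = 0) :
    ∃ x ∈ Set.Icc (0:ℝ) 1, f (f (f x)) = x ∧ f x ≠ x := by
  have hbi1 : bi < 1 := lt_of_lt_of_le hbil hbl1
  -- step 1 : points in [0,bi] hitting bl and bi
  obtain ⟨v₁, hv₁mem, hv₁⟩ := intermediate_value_Icc hbi0 hf.continuousOn
    (show bl ∈ Set.Icc (f 0) (f bi) by rw [hf0, hfi]; exact ⟨hbi0.trans hbil.le, hbl1⟩)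
  obtain ⟨u₁, hu₁mem, hu₁⟩ := intermediate_value_Icc hbi0 hf.continuousOn
    (show bi ∈ Set.Icc (f 0) (f bi) by rw [hf0, hfi]; exact ⟨hbi0, hbi1.le⟩)
  -- step 2 : points in [0,bi] hitting u₁ and v₁
  obtain ⟨u₂, hu₂mem, hu₂⟩ := intermediate_value_Icc hbi0 hf.continuousOn
    (show u₁ ∈ Set.Icc (f 0) (f bi) by
      rw [hf0, hfi]; exact ⟨hu₁mem.1, hu₁mem.2.trans hbi1.le⟩)
  obtain ⟨v₂, hv₂mem, hv₂⟩ := intermediate_value_Icc hbi0 hf.continuousOn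
    (show v₁ ∈ Set.Icc (f 0) (f bi) by
      rw [hf0, hfi]; exact ⟨hv₁mem.1, hv₁mem.2.trans hbi1.le⟩)
  have hh : Continuous fun x => f (f (f x)) - x := (hf.comp (hf.comp hf)).sub continuous_id
  -- step 3 : pull [min u₂ v₂, max u₂ v₂] back into [bi, bl]
  have main : ∃ u₃ v₃, bi ≤ u₃ ∧ u₃ ≤ v₃ ∧ v₃ ≤ bl ∧
      (∀ z ∈ Set.Icc u₃ v₃, f z ≤ bi) ∧
      ∃ x ∈ Set.Icc u₃ v₃, f (f (f x)) = x := by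
    rcases le_total u₂ v₂ with hc | hc
    · obtain ⟨u₃, v₃, h1, h2, h3, h4, h5, h6⟩ := pullback_dec hf hbil.le hc
        (by rw [hfi]; exact hv₂mem.2.trans hbi1.le) (by rw [hfl]; exact hu₂mem.1)
      have horb_u : f (f (f u₃)) = bl := by rw [h4, hv₂, hv₁]
      have horb_v : f (f (f v₃)) = bi := by rw [h5, hu₂, hu₁]
      refine ⟨u₃, v₃, h1, h2, h3, fun z hz => (h6 z hz).2.trans hv₂mem.2, ?_⟩
      obtain ⟨x, hx, hfx⟩ := intermediate_value_Icc' h2 hh.continuousOn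
        (show (0:ℝ) ∈ Set.Icc (f (f (f v₃)) - v₃) (f (f (f u₃)) - u₃) by
          rw [horb_u, horb_v]
          constructor <;> [linarith [h1.trans h2]; linarith [h2.trans h3]])
      exact ⟨x, hx, by linarith [show f (f (f x)) - x = 0 from hfx]⟩
    · obtain ⟨u₃, v₃, h1, h2, h3, h4, h5, h6⟩ := pullback_dec hf hbil.le hc
        (by rw [hfi]; exact hu₂mem.2.trans hbi1.le) (by rw [hfl]; exact hv₂mem.1)
      have horb_u : f (f (f u₃)) = bi := by rw [h4, hu₂, hu₁]
      have horb_v : f (f (f v₃)) = bl := by rw [h5, hv₂, hv₁]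
      refine ⟨u₃, v₃, h1, h2, h3, fun z hz => (h6 z hz).2.trans hu₂mem.2, ?_⟩
      obtain ⟨x, hx, hfx⟩ := intermediate_value_Icc h2 hh.continuousOn
        (show (0:ℝ) ∈ Set.Icc (f (f (f u₃)) - u₃) (f (f (f v₃)) - v₃) by
          rw [horb_u, horb_v]
          constructor <;> [linarith; linarith [h2.trans h3]])
      exact ⟨x, hx, by linarith [show f (f (f x)) - x = 0 from hfx]⟩
  obtain ⟨u₃, v₃, h1, h2, h3, hmap, x, hxmem, hx3⟩ := main
  have hxbi : bi ≤ x := h1.trans hxmem.1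
  have hxbl : x ≤ bl := hxmem.2.trans h3
  refine ⟨x, ⟨hbi0.trans hxbi, hxbl.trans hbl1⟩, hx3, ?_⟩
  intro heq
  have hxbi' : x ≤ bi := heq ▸ hmap x hxmem
  have : x = bi := le_antisymm hxbi' hxbi
  rw [this] at heq
  rw [hfi] at heq
  exact absurd heq (by linarith)

/-- **Sufficient condition for period 3.** If the biases are sorted in `[0,1]`
and the partial sums `y i = ∑_{ι < i} a ι (b i - b ι)` have some `y i > 1`
followed by some later `y ℓ < 0`, then the RNN step map has a point of
period 3. -/
theorem period_three_of_sign_change (k : ℕ) (a b : Fin k → ℝ)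
    (hb_mono : StrictMono b) (hb_mem : ∀ i, b i ∈ Set.Icc (0:ℝ) 1)
    (y : Fin k → ℝ)
    (hy : ∀ i, y i = ∑ ι ∈ Finset.univ.filter (fun ι => ι < i), a ι * (b i - b ι))
    (i ℓ : Fin k) (hiℓ : i < ℓ) (hyi : 1 < y i) (hyℓ : y ℓ < 0) :
    HasPeriod3 (rnnStep a b) := by
  have key : ∀ j, rnnStep a b (b j) = clip (y j) := by
    intro j
    unfold rnnStep
    congr 1
    rw [hy j, Finset.sum_filter]
    apply Finset.sum_congr rfl
    intro ι _
    by_cases h : ι < j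
    · rw [if_pos h, max_eq_left (by linarith [hb_mono h] : (0:ℝ) ≤ b j - b ι)]
    · rw [if_neg h, max_eq_right
        (by linarith [hb_mono.monotone (not_lt.mp h)] : b j - b ι ≤ 0), mul_zero]
  have hfi : rnnStep a b (b i) = 1 := by
    rw [key i]
    unfold clip
    rw [min_eq_right (le_max_of_le_left hyi.le)]
  have hfl : rnnStep a b (b ℓ) = 0 := by
    rw [key ℓ]
    unfold clip
    rw [max_eq_right hyℓ.le, min_eq_left zero_le_one]
  have hf0 : rnnStep a b 0 = 0 := by
    unfold rnnStep clip
    rw [Finset.sum_eq_zero (fun ι _ => by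
      rw [max_eq_right (by linarith [(hb_mem ι).1] : (0:ℝ) - b ι ≤ 0), mul_zero])]
    norm_num
  exact period3_aux (rnnStep_continuous a b) (hb_mem i).1 (hb_mono hiℓ) (hb_mem ℓ).2
    hfi hfl hf0
end

section
/- Let f : [0,1] → [0,1] be continuous with f(0) = 0, and suppose there exist points 0 ≤ p < q ≤ 1 with f(p) = 1 and f(q) = 0. Then f has a point of period 3, i.e., there exists x ∈ [0,1] with f(f(f(x))) = x and f(x) ≠ x. -/
open MeasureTheory ProbabilityTheory Filter Set
open scoped NNReal ENNReal

/-- Core covering lemma on an ordered interval `[u,v]` with `g u = c ≤ d = g v`. -/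
private lemma covering_core (g : ℝ → ℝ) (u v : ℝ) (huv : u ≤ v)
    (hg : ContinuousOn g (Set.Icc u v)) (c d : ℝ) (hcd : c ≤ d)
    (hgu : g u = c) (hgv : g v = d) :
    ∃ s t, u ≤ s ∧ s ≤ t ∧ t ≤ v ∧ g s = c ∧ g t = d ∧
      ∀ x ∈ Set.Icc s t, g x ∈ Set.Icc c d := by
  set T : Set ℝ := Set.Icc u v ∩ g ⁻¹' {d} with hT
  have hTc : IsClosed T := hg.preimage_isClosed_of_isClosed isClosed_Icc isClosed_singleton
  have hTne : T.Nonempty := ⟨v, ⟨huv, le_rfl⟩, hgv⟩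
  have hTbd : BddBelow T := ⟨u, fun y hy => hy.1.1⟩
  set t := sInf T with htdef
  have ht : t ∈ T := hTc.csInf_mem hTne hTbd
  have ht_min : ∀ y ∈ T, t ≤ y := fun y hy => csInf_le hTbd hy
  have hut : u ≤ t := ht.1.1
  have htv : t ≤ v := ht.1.2
  have hgt : g t = d := ht.2
  set S : Set ℝ := Set.Icc u t ∩ g ⁻¹' {c} with hS
  have hgS : ContinuousOn g (Set.Icc u t) := hg.mono (Icc_subset_Icc le_rfl htv)
  have hSc : IsClosed S := hgS.preimage_isClosed_of_isClosed isClosed_Icc isClosed_singleton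
  have hSne : S.Nonempty := ⟨u, ⟨le_rfl, hut⟩, hgu⟩
  have hSbd : BddAbove S := ⟨t, fun y hy => hy.1.2⟩
  set s := sSup S with hsdef
  have hs : s ∈ S := hSc.csSup_mem hSne hSbd
  have hs_max : ∀ y ∈ S, y ≤ s := fun y hy => le_csSup hSbd hy
  have hus : u ≤ s := hs.1.1
  have hst : s ≤ t := hs.1.2
  have hgs : g s = c := hs.2
  refine ⟨s, t, hus, hst, htv, hgs, hgt, ?_⟩
  rintro x ⟨hsx, hxt⟩
  constructor
  · by_contra h
    push_neg at h
    have hcont : ContinuousOn g (Set.Icc x t) :=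
      hg.mono (Icc_subset_Icc (hus.trans hsx) htv)
    have : c ∈ g '' Set.Icc x t := by
      apply intermediate_value_Icc hxt hcont
      rw [hgt]; exact ⟨h.le, hcd⟩
    obtain ⟨y, ⟨hxy, hyt⟩, hgy⟩ := this
    have hys : y ≤ s := hs_max y ⟨⟨hus.trans (hsx.trans hxy), hyt⟩, hgy⟩
    have hxs : x = s := le_antisymm (hxy.trans hys) hsx
    rw [hxs, hgs] at h
    exact lt_irrefl c h
  · by_contra h
    push_neg at h
    have hcont : ContinuousOn g (Set.Icc s x) :=
      hg.mono (Icc_subset_Icc hus (hxt.trans htv))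
    have : d ∈ g '' Set.Icc s x := by
      apply intermediate_value_Icc hsx hcont
      rw [hgs]; exact ⟨hcd, h.le⟩
    obtain ⟨y, ⟨hsy, hyx⟩, hgy⟩ := this
    have hty : t ≤ y := ht_min y ⟨⟨hus.trans hsy, (hyx.trans hxt).trans htv⟩, hgy⟩
    have hxt'' : x = t := le_antisymm hxt (hty.trans hyx)
    rw [hxt'', hgt] at h
    exact lt_irrefl d h

private lemma covering_le (g : ℝ → ℝ) (a b : ℝ) (hg : ContinuousOn g (Set.Icc a b))
    (c d u v : ℝ) (hu : u ∈ Set.Icc a b) (hv : v ∈ Set.Icc a b)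
    (hgu : g u = c) (hgv : g v = d) (hcd : c ≤ d) :
    ∃ s t, s ∈ Set.Icc a b ∧ t ∈ Set.Icc a b ∧ g s = c ∧ g t = d ∧
      ∀ x ∈ Set.uIcc s t, g x ∈ Set.uIcc c d := by
  rcases le_total u v with huv | hvu
  · obtain ⟨s, t, h1, h2, h3, h4, h5, h6⟩ :=
      covering_core g u v huv (hg.mono (Icc_subset_Icc hu.1 hv.2)) c d hcd hgu hgv
    refine ⟨s, t, ⟨hu.1.trans h1, (h2.trans h3).trans hv.2⟩,
      ⟨hu.1.trans (h1.trans h2), h3.trans hv.2⟩, h4, h5, ?_⟩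
    intro x hx
    rw [Set.uIcc_of_le h2] at hx
    rw [Set.uIcc_of_le hcd]
    exact h6 x hx
  · set g' : ℝ → ℝ := fun x => g (u + v - x) with hg'def
    have hmap : Set.MapsTo (fun x => u + v - x) (Set.Icc v u) (Set.Icc a b) := by
      intro x hx
      simp only [Set.mem_Icc] at hx ⊢
      constructor <;> linarith [hv.1, hu.2, hx.1, hx.2]
    have hrefl : ContinuousOn g' (Set.Icc v u) :=
      hg.comp ((continuous_const.sub continuous_id).continuousOn) hmap
    have hg'v : g' v = c := by
      show g (u + v - v) = c
      rw [show u + v - v = u by ring]; exact hgu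
    have hg'u : g' u = d := by
      show g (u + v - u) = d
      rw [show u + v - u = v by ring]; exact hgv
    obtain ⟨s', t', h1, h2, h3, h4, h5, h6⟩ :=
      covering_core g' v u hvu hrefl c d hcd hg'v hg'u
    refine ⟨u + v - s', u + v - t',
      ⟨by linarith [hv.1], by linarith [hu.2]⟩,
      ⟨by linarith [hv.1], by linarith [hu.2]⟩, h4, h5, ?_⟩
    intro x hx
    rw [Set.uIcc_of_ge (by linarith : u + v - t' ≤ u + v - s')] at hx
    rw [Set.uIcc_of_le hcd]
    have : u + v - x ∈ Set.Icc s' t' := ⟨by linarith [hx.2], by linarith [hx.1]⟩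
    have := h6 (u + v - x) this
    simpa [hg'def, show u + v - (u + v - x) = x by ring] using this

/-- General covering lemma. -/
private lemma covering (g : ℝ → ℝ) (a b : ℝ) (hg : ContinuousOn g (Set.Icc a b))
    (c d u v : ℝ) (hu : u ∈ Set.Icc a b) (hv : v ∈ Set.Icc a b)
    (hgu : g u = c) (hgv : g v = d) :
    ∃ s t, s ∈ Set.Icc a b ∧ t ∈ Set.Icc a b ∧ g s = c ∧ g t = d ∧
      ∀ x ∈ Set.uIcc s t, g x ∈ Set.uIcc c d := by
  rcases le_total c d with hcd | hdc
  · exact covering_le g a b hg c d u v hu hv hgu hgv hcd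
  · obtain ⟨s, t, hs, ht, h1, h2, h3⟩ := covering_le g a b hg d c v u hv hu hgv hgu hdc
    exact ⟨t, s, ht, hs, h2, h1, fun x hx => by
      rw [Set.uIcc_comm c d]
      exact h3 x (by rwa [Set.uIcc_comm t s] at hx)⟩

/-- If a continuous self-map of `[0,1]` fixes `0`, attains the value `1` at some
point `p` and the value `0` at some later point `q > p`, then it has a point of
period 3. -/
theorem period_three_of_onto_intervals (f : ℝ → ℝ)
    (hc : ContinuousOn f (Set.Icc 0 1))
    (hmaps : Set.MapsTo f (Set.Icc 0 1) (Set.Icc 0 1))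
    (h0 : f 0 = 0) (p q : ℝ) (hp : 0 ≤ p) (hpq : p < q) (hq : q ≤ 1)
    (hfp : f p = 1) (hfq : f q = 0) :
    ∃ x ∈ Set.Icc (0:ℝ) 1, f (f (f x)) = x ∧ f x ≠ x := by
  have hp1 : p ≤ 1 := hpq.le.trans hq
  have hq0 : 0 ≤ q := hp.trans hpq.le
  have hc0p : ContinuousOn f (Set.Icc 0 p) := hc.mono (Icc_subset_Icc le_rfl hp1)
  have hcpq : ContinuousOn f (Set.Icc p q) := hc.mono (Icc_subset_Icc hp hq)
  -- f '' [0,p] ⊇ [0,1]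
  have himg0p : Set.Icc (0:ℝ) 1 ⊆ f '' Set.Icc 0 p := by
    have := intermediate_value_Icc hp hc0p
    rwa [h0, hfp] at this
  -- f '' [p,q] ⊇ [0,1]
  have himgpq : Set.Icc (0:ℝ) 1 ⊆ f '' Set.Icc p q := by
    have := intermediate_value_Icc' hpq.le hcpq
    rwa [hfq, hfp] at this
  -- Level 2: interval in [0,p] mapping to [p,q] with endpoints p, q
  obtain ⟨u2, hu2, hfu2⟩ := himg0p ⟨hp, hp1⟩
  obtain ⟨v2, hv2, hfv2⟩ := himg0p ⟨hq0, hq⟩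
  obtain ⟨s2, t2, hs2, ht2, hfs2, hft2, H2⟩ :=
    covering f 0 p hc0p p q u2 v2 hu2 hv2 hfu2 hfv2
  -- Level 1: interval in [0,p] mapping to uIcc s2 t2 with endpoints s2, t2
  obtain ⟨u1, hu1, hfu1⟩ := himg0p ⟨hs2.1, hs2.2.trans hp1⟩
  obtain ⟨v1, hv1, hfv1⟩ := himg0p ⟨ht2.1, ht2.2.trans hp1⟩
  obtain ⟨s1, t1, hs1, ht1, hfs1, hft1, H1⟩ :=
    covering f 0 p hc0p s2 t2 u1 v1 hu1 hv1 hfu1 hfv1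
  -- Level 0: interval in [p,q] mapping to uIcc s1 t1 with endpoints s1, t1
  obtain ⟨u0, hu0, hfu0⟩ := himgpq ⟨hs1.1, hs1.2.trans hp1⟩
  obtain ⟨v0, hv0, hfv0⟩ := himgpq ⟨ht1.1, ht1.2.trans hp1⟩
  obtain ⟨s0, t0, hs0, ht0, hfs0, hft0, H0⟩ :=
    covering f p q hcpq s1 t1 u0 v0 hu0 hv0 hfu0 hfv0
  -- subset relations
  have hsub0 : Set.uIcc s0 t0 ⊆ Set.Icc p q := Set.uIcc_subset_Icc hs0 ht0
  have hsub1 : Set.uIcc s1 t1 ⊆ Set.Icc 0 p := Set.uIcc_subset_Icc hs1 ht1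
  have hsub2 : Set.uIcc s2 t2 ⊆ Set.Icc 0 p := Set.uIcc_subset_Icc hs2 ht2
  have hpq01 : Set.Icc p q ⊆ Set.Icc (0:ℝ) 1 := Icc_subset_Icc hp hq
  have h0p01 : Set.Icc (0:ℝ) p ⊆ Set.Icc (0:ℝ) 1 := Icc_subset_Icc le_rfl hp1
  -- the third iterate on uIcc s0 t0
  set F : ℝ → ℝ := fun x => f (f (f x)) with hF
  have hFcont : ContinuousOn F (Set.uIcc s0 t0) := by
    apply ContinuousOn.comp hc
    · apply ContinuousOn.comp hc
      · exact hc.mono (hsub0.trans hpq01)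
      · intro x hx
        exact h0p01 (hsub1 (H0 x hx))
    · intro x hx
      exact h0p01 (hsub2 (H1 (f x) (H0 x hx)))
  have hFs0 : F s0 = p := by
    simp only [hF]
    rw [hfs0, hfs1, hfs2]
  have hFt0 : F t0 = q := by
    simp only [hF]
    rw [hft0, hft1, hft2]
  -- find a fixed point of F via IVT on G x = F x - x
  set G : ℝ → ℝ := fun x => F x - x with hG
  have hGcont : ContinuousOn G (Set.uIcc s0 t0) := hFcont.sub continuousOn_id
  have hGs0 : G s0 ≤ 0 := by
    simp only [hG, hFs0]
    linarith [(hs0).1]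
  have hGt0 : 0 ≤ G t0 := by
    simp only [hG, hFt0]
    linarith [(ht0).2]
  have : (0:ℝ) ∈ Set.uIcc (G s0) (G t0) := Set.mem_uIcc.2 (Or.inl ⟨hGs0, hGt0⟩)
  obtain ⟨x, hx, hGx⟩ := intermediate_value_uIcc hGcont this
  have hFx : F x = x := by
    have : F x - x = 0 := hGx
    linarith
  have hx01 : x ∈ Set.Icc (0:ℝ) 1 := hpq01 (hsub0 hx)
  refine ⟨x, hx01, hFx, ?_⟩
  intro hfx
  -- f x ∈ [0,p] so f x ≤ p; x ∈ [p,q] so p ≤ x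
  have hfxp : f x ≤ p := (hsub1 (H0 x hx)).2
  have hpx : p ≤ x := (hsub0 hx).1
  have hxp : x = p := le_antisymm (by rw [← hfx]; exact hfxp) hpx
  rw [hxp] at hfx
  rw [hfp] at hfx
  have : q ≤ 1 := hq
  linarith [hpq]
end

section
/- For every integer k ≥ 2, if the weights a_1, …, a_k are i.i.d. Gaussian N(0, 1/(4k log k)) and the biases b_1, …, b_k are i.i.d. Uniform[0,1] independent of the weights, then the probability that the RNN step map f_{a,b} has a fixed point in (0,1] (i.e., some x ∈ (0,1] with f_{a,b}(x) = x) is at most 1/k. -/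
open MeasureTheory ProbabilityTheory Filter Set
open scoped NNReal ENNReal

/-! ### Auxiliary deterministic lemmas -/

lemma abel_bound {k : ℕ} : ∀ (n : ℕ) (s : Finset (Fin k)) (a b : Fin k → ℝ) (x M : ℝ),
    s.card ≤ n → 0 ≤ x → 0 ≤ M → (∀ i ∈ s, 0 ≤ b i) →
    (∀ t : ℝ, t < x → ∑ i ∈ s.filter (fun i => b i ≤ t), a i ≤ M) →
    ∑ i ∈ s, a i * max (x - b i) 0 ≤ M * x := by
  intro n
  induction n with
  | zero =>
    intro s a b x M hcard hx hM _ _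
    have : s = ∅ := Finset.card_eq_zero.mp (Nat.le_zero.mp hcard)
    simp [this]
    positivity
  | succ n ih =>
    intro s a b x M hcard hx hM hb hyp
    rcases s.eq_empty_or_nonempty with rfl | hne
    · simp; positivity
    obtain ⟨j0, hj0s, hj0⟩ := Finset.exists_mem_eq_sup' hne b
    have hble : ∀ i ∈ s, b i ≤ b j0 := fun i hi => hj0 ▸ Finset.le_sup' b hi
    have hβ0 : 0 ≤ b j0 := hb j0 hj0s
    have hj0ns₂ : j0 ∉ s.filter (fun i => ¬ b i = b j0) := by
      simp [hj0s]
    have hcard2 : (s.filter (fun i => ¬ b i = b j0)).card ≤ n := by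
      have hss : s.filter (fun i => ¬ b i = b j0) ⊂ s :=
        Finset.ssubset_iff_of_subset (Finset.filter_subset _ _) |>.2 ⟨j0, hj0s, hj0ns₂⟩
      have := Finset.card_lt_card hss
      omega
    have hfeq : ∀ t : ℝ, t < b j0 →
        (s.filter (fun i => ¬ b i = b j0)).filter (fun i => b i ≤ t)
          = s.filter (fun i => b i ≤ t) := by
      intro t ht
      ext i
      simp only [Finset.mem_filter]
      exact ⟨fun h => ⟨h.1.1, h.2⟩,
        fun h => ⟨⟨h.1, fun hc => absurd (hc ▸ h.2) (not_le.2 ht)⟩, h.2⟩⟩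
    have hsplit := Finset.sum_filter_add_sum_filter_not s (fun i => b i = b j0)
      (fun i => a i * max (x - b i) 0)
    rcases le_or_gt x (b j0) with h1 | h2
    · have hsum1 : ∑ i ∈ s.filter (fun i => b i = b j0), a i * max (x - b i) 0 = 0 := by
        refine Finset.sum_eq_zero fun i hi => ?_
        rcases Finset.mem_filter.mp hi with ⟨-, hib⟩
        rw [hib, max_eq_right (by linarith), mul_zero]
      have hIH := ih (s.filter (fun i => ¬ b i = b j0)) a b x M hcard2 hx hM
        (fun i hi => hb i (Finset.mem_of_mem_filter i hi))
        (fun t ht => by rw [hfeq t (lt_of_lt_of_le ht h1)]; exact hyp t ht)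
      calc ∑ i ∈ s, a i * max (x - b i) 0
          = ∑ i ∈ s.filter (fun i => ¬ b i = b j0), a i * max (x - b i) 0 := by
            rw [← hsplit, hsum1, zero_add]
        _ ≤ M * x := hIH
    · have hmax2 : ∀ i ∈ s.filter (fun i => ¬ b i = b j0),
          a i * max (x - b i) 0 = a i * max (b j0 - b i) 0 + a i * (x - b j0) := by
        intro i hi
        rcases Finset.mem_filter.mp hi with ⟨his, hne'⟩
        have hlt : b i < b j0 := lt_of_le_of_ne (hble i his) hne'
        rw [max_eq_left (by linarith), max_eq_left (by linarith)]
        ring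
      have hmax1 : ∀ i ∈ s.filter (fun i => b i = b j0),
          a i * max (x - b i) 0 = a i * (x - b j0) := by
        intro i hi
        rcases Finset.mem_filter.mp hi with ⟨-, hib⟩
        rw [hib, max_eq_left (by linarith)]
      have hIH := ih (s.filter (fun i => ¬ b i = b j0)) a b (b j0) M hcard2 hβ0 hM
        (fun i hi => hb i (Finset.mem_of_mem_filter i hi))
        (fun t ht => by rw [hfeq t ht]; exact hyp t (ht.trans h2))
      have hsumall : ∑ i ∈ s, a i ≤ M := by
        have h := hyp (b j0) h2
        rwa [Finset.filter_true_of_mem hble] at h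
      have hABle : (∑ i ∈ s.filter (fun i => b i = b j0), a i)
          + ∑ i ∈ s.filter (fun i => ¬ b i = b j0), a i ≤ M :=
        le_of_eq_of_le (Finset.sum_filter_add_sum_filter_not s _ a) hsumall
      have hxb : (0:ℝ) ≤ x - b j0 := by linarith
      calc ∑ i ∈ s, a i * max (x - b i) 0
          = (∑ i ∈ s.filter (fun i => b i = b j0), a i) * (x - b j0)
            + (∑ i ∈ s.filter (fun i => ¬ b i = b j0), a i * max (b j0 - b i) 0
               + (∑ i ∈ s.filter (fun i => ¬ b i = b j0), a i) * (x - b j0)) := by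
            rw [← hsplit, Finset.sum_congr rfl hmax1, Finset.sum_congr rfl hmax2,
              Finset.sum_add_distrib, ← Finset.sum_mul, ← Finset.sum_mul]
        _ ≤ (∑ i ∈ s.filter (fun i => b i = b j0), a i) * (x - b j0)
            + (M * b j0 + (∑ i ∈ s.filter (fun i => ¬ b i = b j0), a i) * (x - b j0)) := by
            linarith [hIH]
        _ ≤ M * x := by nlinarith [mul_le_mul_of_nonneg_right hABle hxb]

lemma exists_prefix {k : ℕ} (a b : Fin k → ℝ) (hb : ∀ i, 0 ≤ b i) {x : ℝ}
    (hx : x ∈ Set.Ioc (0:ℝ) 1) (hfix : rnnStep a b x = x) :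
    ∃ j, 1 ≤ ∑ i ∈ Finset.univ.filter (fun i => b i ≤ b j), a i := by
  obtain ⟨hx0, hx1⟩ := hx
  have hxy : x ≤ ∑ i, a i * max (x - b i) 0 := by
    unfold rnnStep clip at hfix
    set y := ∑ i, a i * max (x - b i) 0 with hy
    have h1 : x ≤ max y 0 := hfix ▸ min_le_left _ _
    rcases le_or_gt y 0 with h | h
    · rw [max_eq_right h] at h1; linarith
    · rwa [max_eq_left h.le] at h1
  by_contra hcon
  push_neg at hcon
  set P : Fin k → ℝ := fun j => ∑ i ∈ Finset.univ.filter (fun i => b i ≤ b j), a i with hP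
  have hMne : (insert (0:ℝ) (Finset.univ.image P)).Nonempty := Finset.insert_nonempty _ _
  set M : ℝ := (insert (0:ℝ) (Finset.univ.image P)).max' hMne with hM
  have hM0 : 0 ≤ M := Finset.le_max' _ 0 (Finset.mem_insert_self _ _)
  have hM1 : M < 1 := by
    apply (Finset.max'_lt_iff _ hMne).2
    intro y hy
    rcases Finset.mem_insert.mp hy with rfl | hy
    · norm_num
    · obtain ⟨j, -, rfl⟩ := Finset.mem_image.mp hy
      exact hcon j
  have hyp : ∀ t : ℝ, t < x → ∑ i ∈ Finset.univ.filter (fun i => b i ≤ t), a i ≤ M := by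
    intro t ht
    rcases (Finset.univ.filter (fun i => b i ≤ t)).eq_empty_or_nonempty with he | hne
    · rw [he]; simpa using hM0
    · obtain ⟨j, hjmem, hjmax⟩ := Finset.exists_mem_eq_sup' hne b
      have hjt : b j ≤ t := (Finset.mem_filter.mp hjmem).2
      have heq : Finset.univ.filter (fun i => b i ≤ t)
          = Finset.univ.filter (fun i => b i ≤ b j) := by
        ext i
        simp only [Finset.mem_filter, Finset.mem_univ, true_and]
        constructor
        · intro hit
          have h2 : b i ≤ (Finset.univ.filter (fun i => b i ≤ t)).sup' hne b :=
            Finset.le_sup' b (Finset.mem_filter.mpr ⟨Finset.mem_univ i, hit⟩)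
          rwa [hjmax] at h2
        · intro hij; exact hij.trans hjt
      rw [heq]
      exact Finset.le_max' _ (P j)
        (Finset.mem_insert_of_mem (Finset.mem_image_of_mem P (Finset.mem_univ j)))
  have habel := abel_bound k Finset.univ a b x M
    (le_of_eq (Finset.card_univ.trans (Fintype.card_fin k)))
    hx0.le hM0 (fun i _ => hb i) hyp
  have hlt := mul_lt_mul_of_pos_right hM1 hx0
  rw [one_mul] at hlt
  linarith

/-! ### Gaussian auxiliary lemmas -/

lemma gauss_pdf_mul_exp (v : ℝ≥0) (hv : v ≠ 0) (l x : ℝ) :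
    gaussianPDFReal 0 v x * Real.exp (l * x)
      = Real.exp (l ^ 2 * v / 2) * gaussianPDFReal (l * v) v x := by
  have hv' : (0:ℝ) < v := lt_of_le_of_ne v.coe_nonneg (by exact_mod_cast hv.symm)
  rw [gaussianPDFReal_def, gaussianPDFReal_def]
  have key : -(x - 0) ^ 2 / (2 * v) + l * x
      = l ^ 2 * v / 2 + -(x - l * v) ^ 2 / (2 * v) := by
    field_simp
    ring
  rw [mul_assoc, ← Real.exp_add, key, Real.exp_add]
  ring

lemma gauss_smul_eq (v : ℝ≥0) (hv : v ≠ 0) (l : ℝ) :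
    (fun x => (gaussianPDFReal 0 v x).toNNReal • Real.exp (l * x))
      = fun x => Real.exp (l ^ 2 * v / 2) * gaussianPDFReal (l * v) v x := by
  funext x
  rw [NNReal.smul_def, smul_eq_mul, Real.coe_toNNReal _ (gaussianPDFReal_nonneg 0 v x),
    gauss_pdf_mul_exp v hv l x]

lemma integrable_exp_gaussian (v : ℝ≥0) (hv : v ≠ 0) (l : ℝ) :
    Integrable (fun x => Real.exp (l * x)) (gaussianReal 0 v) := by
  rw [gaussianReal_of_var_ne_zero 0 hv]
  have : (gaussianPDF 0 v) = fun x => ((gaussianPDFReal 0 v x).toNNReal : ℝ≥0∞) := rfl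
  rw [this, integrable_withDensity_iff_integrable_smul
    ((measurable_gaussianPDFReal 0 v).real_toNNReal)]
  rw [gauss_smul_eq v hv l]
  exact (integrable_gaussianPDFReal (l * v) v).const_mul _

lemma integral_exp_gaussian (v : ℝ≥0) (hv : v ≠ 0) (l : ℝ) :
    ∫ x, Real.exp (l * x) ∂(gaussianReal 0 v) = Real.exp (l ^ 2 * v / 2) := by
  rw [gaussianReal_of_var_ne_zero 0 hv]
  have : (gaussianPDF 0 v) = fun x => ((gaussianPDFReal 0 v x).toNNReal : ℝ≥0∞) := rfl
  rw [this, integral_withDensity_eq_integral_smul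
    ((measurable_gaussianPDFReal 0 v).real_toNNReal)]
  rw [gauss_smul_eq v hv l, integral_const_mul,
    integral_gaussianPDFReal_eq_one (l * v) hv, mul_one]

lemma exp_sum_eq_prod {k : ℕ} (T : Finset (Fin k)) (l : ℝ) (a : Fin k → ℝ) :
    Real.exp (l * ∑ i ∈ T, a i)
      = ∏ i : Fin k, (if i ∈ T then Real.exp (l * a i) else 1) := by
  rw [Finset.prod_ite_mem, Finset.univ_inter, Finset.mul_sum, Real.exp_sum]

lemma pi_gauss_integrable {k : ℕ} (v : ℝ≥0) (hv : v ≠ 0) (T : Finset (Fin k)) (l : ℝ) :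
    Integrable (fun a : Fin k → ℝ => Real.exp (l * ∑ i ∈ T, a i))
      (Measure.pi fun _ => gaussianReal 0 v) := by
  letI : MeasureSpace ℝ := ⟨gaussianReal 0 v⟩
  haveI : IsProbabilityMeasure (volume : Measure ℝ) :=
    inferInstanceAs (IsProbabilityMeasure (gaussianReal 0 v))
  have : (Measure.pi fun _ : Fin k => gaussianReal 0 v) = volume := rfl
  rw [this]
  simp_rw [exp_sum_eq_prod T l]
  apply Integrable.fintype_prod (f := fun i x => if i ∈ T then Real.exp (l * x) else 1)
  intro i
  by_cases h : i ∈ T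
  · simp only [h, if_true]
    exact integrable_exp_gaussian v hv l
  · simp [h]

lemma pi_gauss_mgf {k : ℕ} (v : ℝ≥0) (hv : v ≠ 0) (T : Finset (Fin k)) (l : ℝ) :
    ∫ a : Fin k → ℝ, Real.exp (l * ∑ i ∈ T, a i) ∂(Measure.pi fun _ => gaussianReal 0 v)
      = Real.exp (T.card * (l ^ 2 * v / 2)) := by
  letI : MeasureSpace ℝ := ⟨gaussianReal 0 v⟩
  haveI : IsProbabilityMeasure (volume : Measure ℝ) :=
    inferInstanceAs (IsProbabilityMeasure (gaussianReal 0 v))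
  have hvol : (Measure.pi fun _ : Fin k => gaussianReal 0 v) = volume := rfl
  rw [hvol]
  simp_rw [exp_sum_eq_prod T l]
  rw [MeasureTheory.integral_fintype_prod_volume_eq_prod (ι := Fin k)
    (f := fun i x => if i ∈ T then Real.exp (l * x) else 1)]
  have : ∀ i : Fin k, ∫ x : ℝ, (if i ∈ T then Real.exp (l * x) else 1)
      = if i ∈ T then Real.exp (l ^ 2 * v / 2) else 1 := by
    intro i
    by_cases h : i ∈ T
    · simp only [h, if_true]
      exact integral_exp_gaussian v hv l
    · simp [h]
  simp_rw [this]
  rw [Finset.prod_ite_mem, Finset.univ_inter, Finset.prod_const, ← Real.exp_nat_mul]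

lemma pi_gauss_tail {k : ℕ} (v : ℝ≥0) (hv : v ≠ 0) (T : Finset (Fin k)) (l : ℝ) (hl : 0 ≤ l) :
    (Measure.pi fun _ : Fin k => gaussianReal 0 v) {a | 1 ≤ ∑ i ∈ T, a i}
      ≤ ENNReal.ofReal (Real.exp (-l + T.card * (l ^ 2 * v / 2))) := by
  have hint := pi_gauss_integrable v hv T l
  have h := ProbabilityTheory.measure_ge_le_exp_mul_mgf
    (X := fun a : Fin k → ℝ => ∑ i ∈ T, a i) 1 hl hint
  set μ := Measure.pi fun _ : Fin k => gaussianReal 0 v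
  rw [ProbabilityTheory.mgf] at h
  rw [pi_gauss_mgf v hv T l] at h
  have hne : μ {a | 1 ≤ ∑ i ∈ T, a i} ≠ ∞ := measure_ne_top _ _
  rw [← Real.exp_add, mul_one] at h
  exact (ENNReal.le_ofReal_iff_toReal_le hne (Real.exp_nonneg _)).2 h

/-! ### Main theorem -/

/-- **No nontrivial fixed points at low variance.** With weights i.i.d.
`N(0, 1/(4 k log k))` and biases i.i.d. `Uniform[0,1]`, the probability that the
RNN step map has a fixed point in `(0,1]` is at most `1/k`. -/
theorem no_fixed_point_low_variance (k : ℕ) (hk : 2 ≤ k) :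
    rnnMeasure k ((1 / (4 * k * Real.log k)).toNNReal)
        {p | ∃ x ∈ Set.Ioc (0:ℝ) 1, rnnStep p.1 p.2 x = x} ≤
      1 / (k : ℝ≥0∞) := by
  have hk1 : (1:ℝ) < k := by exact_mod_cast hk.trans_lt' one_lt_two
  have hk0 : (0:ℝ) < k := by linarith
  have hlk : 0 < Real.log k := Real.log_pos hk1
  set lk := Real.log k with hlkdef
  have hvpos : 0 < 1 / (4 * k * lk) := by positivity
  set v : ℝ≥0 := (1 / (4 * (k:ℝ) * lk)).toNNReal with hvdef
  have hv : v ≠ 0 := by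
    rw [hvdef, ← NNReal.coe_ne_zero, Real.coe_toNNReal _ hvpos.le]
    exact ne_of_gt hvpos
  have hvr : (v : ℝ) = 1 / (4 * k * lk) := Real.coe_toNNReal _ hvpos.le
  set μ := Measure.pi fun _ : Fin k => gaussianReal 0 v with hμdef
  set ν := Measure.pi fun _ : Fin k => volume.restrict (Set.Icc (0:ℝ) 1) with hνdef
  haveI : IsProbabilityMeasure (volume.restrict (Set.Icc (0:ℝ) 1)) := by
    constructor
    rw [Measure.restrict_apply MeasurableSet.univ, Set.univ_inter, Real.volume_Icc]
    norm_num
  haveI : IsProbabilityMeasure ν := by rw [hνdef]; infer_instance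
  have hrnn : rnnMeasure k v = μ.prod ν := rfl
  -- The bias box
  set S : Set (Fin k → ℝ) := Set.univ.pi fun _ => Set.Icc (0:ℝ) 1 with hSdef
  have hSmeas : MeasurableSet S := MeasurableSet.univ_pi fun _ => measurableSet_Icc
  have hνS : ν S = 1 := by
    rw [hνdef, hSdef, Measure.pi_pi]
    have : ∀ i : Fin k, (volume.restrict (Set.Icc (0:ℝ) 1)) (Set.Icc (0:ℝ) 1) = 1 := by
      intro i
      rw [Measure.restrict_apply measurableSet_Icc, Set.inter_self, Real.volume_Icc]
      norm_num
    simp [this]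
  have hνSc : ν Sᶜ = 0 := by
    rw [measure_compl hSmeas (measure_ne_top _ _), hνS, measure_univ, tsub_self]
  -- the prefix events
  set F : Fin k → Set ((Fin k → ℝ) × (Fin k → ℝ)) := fun j =>
    {p | 1 ≤ ∑ i ∈ Finset.univ.filter (fun i => p.2 i ≤ p.2 j), p.1 i} with hFdef
  have hFmeas : ∀ j, MeasurableSet (F j) := by
    intro j
    have hg : Measurable fun p : (Fin k → ℝ) × (Fin k → ℝ) =>
        ∑ i ∈ Finset.univ.filter (fun i => p.2 i ≤ p.2 j), p.1 i := by
      have : (fun p : (Fin k → ℝ) × (Fin k → ℝ) =>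
          ∑ i ∈ Finset.univ.filter (fun i => p.2 i ≤ p.2 j), p.1 i)
          = fun p => ∑ i : Fin k, (if p.2 i ≤ p.2 j then p.1 i else 0) := by
        funext p
        rw [Finset.sum_filter]
      rw [this]
      apply Finset.measurable_sum
      intro i _
      exact Measurable.ite
        (measurableSet_le (by fun_prop) (by fun_prop)) (by fun_prop) measurable_const
    exact measurableSet_le measurable_const hg
  -- inclusion of the event
  set E : Set ((Fin k → ℝ) × (Fin k → ℝ)) :=
    {p | ∃ x ∈ Set.Ioc (0:ℝ) 1, rnnStep p.1 p.2 x = x} with hEdef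
  have hincl : E ∩ Prod.snd ⁻¹' S ⊆ ⋃ j, F j := by
    rintro ⟨a, b⟩ ⟨⟨x, hx, hfix⟩, hbS⟩
    have hb : ∀ i, 0 ≤ b i := fun i => (hbS i (Set.mem_univ i)).1
    obtain ⟨j, hj⟩ := exists_prefix a b hb hx hfix
    exact Set.mem_iUnion.2 ⟨j, hj⟩
  -- bound each F j
  have hFbound : ∀ j, (μ.prod ν) (F j) ≤ ENNReal.ofReal (Real.exp (-(2 * lk))) := by
    intro j
    rw [Measure.prod_apply_symm (hFmeas j)]
    have hslice : ∀ b : Fin k → ℝ,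
        μ ((fun a => (a, b)) ⁻¹' F j) ≤ ENNReal.ofReal (Real.exp (-(2 * lk))) := by
      intro b
      have hpre : (fun a : Fin k → ℝ => (a, b)) ⁻¹' F j
          = {a : Fin k → ℝ | 1 ≤ ∑ i ∈ Finset.univ.filter (fun i => b i ≤ b j), a i} := rfl
      rw [hpre]
      refine (pi_gauss_tail v hv _ (4 * lk) (by positivity)).trans ?_
      apply ENNReal.ofReal_le_ofReal
      apply Real.exp_le_exp.2
      have hcard : ((Finset.univ.filter (fun i => b i ≤ b j)).card : ℝ) ≤ k := by
        have := (Finset.card_filter_le Finset.univ (fun i => b i ≤ b j)).trans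
          (le_of_eq (Finset.card_univ.trans (Fintype.card_fin k)))
        exact_mod_cast this
      have hterm : ((Finset.univ.filter (fun i => b i ≤ b j)).card : ℝ)
          * ((4 * lk) ^ 2 * v / 2) ≤ 2 * lk := by
        rw [hvr]
        have hrw : ((4 * lk) ^ 2 * (1 / (4 * k * lk)) / 2) = 2 * lk / k := by
          field_simp
          ring
        rw [hrw]
        calc ((Finset.univ.filter (fun i => b i ≤ b j)).card : ℝ) * (2 * lk / k)
            ≤ (k:ℝ) * (2 * lk / k) := mul_le_mul_of_nonneg_right hcard (by positivity)
          _ = 2 * lk := by field_simp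
      linarith
    calc ∫⁻ b, μ ((fun a => (a, b)) ⁻¹' F j) ∂ν
        ≤ ∫⁻ _, ENNReal.ofReal (Real.exp (-(2 * lk))) ∂ν := lintegral_mono hslice
      _ = ENNReal.ofReal (Real.exp (-(2 * lk))) := by
          rw [lintegral_const, measure_univ, mul_one]
  -- put everything together
  have hsplit : (μ.prod ν) E ≤ (μ.prod ν) (E ∩ Prod.snd ⁻¹' S) + (μ.prod ν) (Prod.snd ⁻¹' S)ᶜ := by
    refine (measure_mono ?_).trans (measure_union_le _ _)
    intro p hp
    by_cases h : p ∈ Prod.snd ⁻¹' S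
    · exact Or.inl ⟨hp, h⟩
    · exact Or.inr h
  have hSc0 : (μ.prod ν) (Prod.snd ⁻¹' S)ᶜ = 0 := by
    have hpre : (Prod.snd ⁻¹' S)ᶜ = (Set.univ : Set (Fin k → ℝ)) ×ˢ Sᶜ := by
      ext ⟨a, b⟩
      simp
    rw [hpre, Measure.prod_prod, hνSc, mul_zero]
  have hstep : (μ.prod ν) E ≤ ∑' j : Fin k, (μ.prod ν) (F j) := by
    refine hsplit.trans ?_
    rw [hSc0, add_zero]
    exact (measure_mono hincl).trans (measure_iUnion_le F)
  -- numerics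
  have hexp : Real.exp (-(2 * lk)) = (k:ℝ)⁻¹ * (k:ℝ)⁻¹ := by
    have h1 : Real.exp (-lk) = (k:ℝ)⁻¹ := by
      rw [Real.exp_neg, hlkdef, Real.exp_log hk0]
    rw [show -(2 * lk) = -lk + -lk by ring, Real.exp_add, h1]
  have hfinal : ∑' j : Fin k, (μ.prod ν) (F j) ≤ 1 / (k : ℝ≥0∞) := by
    calc ∑' j : Fin k, (μ.prod ν) (F j)
        ≤ ∑' _ : Fin k, ENNReal.ofReal (Real.exp (-(2 * lk))) := ENNReal.tsum_le_tsum hFbound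
      _ = (k : ℝ≥0∞) * ENNReal.ofReal (Real.exp (-(2 * lk))) := by
          rw [tsum_fintype, Finset.sum_const, Finset.card_univ, Fintype.card_fin, nsmul_eq_mul]
      _ = ENNReal.ofReal ((k:ℝ) * ((k:ℝ)⁻¹ * (k:ℝ)⁻¹)) := by
          rw [hexp, ← ENNReal.ofReal_natCast k, ← ENNReal.ofReal_mul (by positivity)]
      _ = ENNReal.ofReal ((k:ℝ)⁻¹) := by
          congr 1
          field_simp
      _ = 1 / (k : ℝ≥0∞) := by
          rw [ENNReal.ofReal_inv_of_pos hk0, ENNReal.ofReal_natCast, one_div]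
  exact (hrnn ▸ hstep).trans hfinal
end

section
/- Let t ≥ 2 be an integer and let Σ be a real symmetric positive-definite t × t matrix with Σ_{jj} = 1 for every j and |Σ_{jj'}| ≤ 1/t⁴ for every pair j ≠ j'. Let μ be the centered Gaussian measure on ℝ^t with covariance Σ, i.e., the measure with density x ↦ (2π)^{−t/2} (det Σ)^{−1/2} exp(−½ xᵀ Σ⁻¹ x) with respect to Lebesgue measure on ℝ^t. Then for every sign pattern α ∈ {−1, 1}^t, μ({x ∈ ℝ^t : α_j x_j > 0 for all j ∈ {1, …, t}}) ≥ (1 − 1/t) · 2^{−t}. -/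
open MeasureTheory Matrix

lemma quad_dev {t : ℕ} (M : Matrix (Fin t) (Fin t) ℝ) {ε : ℝ} (hε : 0 ≤ ε)
    (h : ∀ i j, |M i j - if i = j then (1:ℝ) else 0| ≤ ε) (x : Fin t → ℝ) :
    |x ⬝ᵥ (M *ᵥ x) - ∑ j, x j ^ 2| ≤ ε * t * ∑ j, x j ^ 2 := by
  have h1 : x ⬝ᵥ (M *ᵥ x) = ∑ i, ∑ j, x i * M i j * x j := by
    simp [dotProduct, mulVec, Finset.mul_sum, mul_assoc]
  have h2 : ∑ j, x j ^ 2 = ∑ i, ∑ j, x i * (if i = j then (1:ℝ) else 0) * x j := by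
    simp [mul_ite, ite_mul, Finset.sum_ite_eq', sq]
  have hexp : x ⬝ᵥ (M *ᵥ x) - ∑ j, x j ^ 2
      = ∑ i, ∑ j, x i * (M i j - if i = j then 1 else 0) * x j := by
    rw [h1, h2, ← Finset.sum_sub_distrib]
    refine Finset.sum_congr rfl fun i _ => ?_
    rw [← Finset.sum_sub_distrib]
    exact Finset.sum_congr rfl fun j _ => by ring
  rw [hexp]
  calc |∑ i, ∑ j, x i * (M i j - if i = j then 1 else 0) * x j|
      ≤ ∑ i, ∑ j, |x i| * ε * |x j| := by
        refine (Finset.abs_sum_le_sum_abs _ _).trans (Finset.sum_le_sum fun i _ => ?_)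
        refine (Finset.abs_sum_le_sum_abs _ _).trans (Finset.sum_le_sum fun j _ => ?_)
        rw [abs_mul, abs_mul]
        exact mul_le_mul_of_nonneg_right
          (mul_le_mul_of_nonneg_left (h i j) (abs_nonneg _)) (abs_nonneg _)
    _ = ε * ((∑ i, |x i|) * (∑ j, |x j|)) := by
        rw [Finset.sum_mul_sum, Finset.mul_sum]
        refine Finset.sum_congr rfl fun i _ => ?_
        rw [Finset.mul_sum]
        exact Finset.sum_congr rfl fun j _ => by ring
    _ ≤ ε * (t * ∑ j, x j ^ 2) := by
        refine mul_le_mul_of_nonneg_left ?_ hε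
        have h3 := sq_sum_le_card_mul_sum_sq (s := (Finset.univ : Finset (Fin t)))
          (f := fun j => |x j|)
        simpa [sq_abs, sq] using h3
    _ = ε * t * ∑ j, x j ^ 2 := by ring

lemma inv_quad_bound {t : ℕ} {M : Matrix (Fin t) (Fin t) ℝ} (hM : M.PosDef) {δ : ℝ} (hδ1 : δ < 1)
    (hq : ∀ y : Fin t → ℝ, (1 - δ) * ∑ j, y j ^ 2 ≤ y ⬝ᵥ (M *ᵥ y))
    (x : Fin t → ℝ) : x ⬝ᵥ (M⁻¹ *ᵥ x) ≤ (∑ j, x j ^ 2) / (1 - δ) := by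
  set y := M⁻¹ *ᵥ x with hy
  have hdet : IsUnit M.det := isUnit_iff_ne_zero.mpr (ne_of_gt hM.det_pos)
  have hxy : M *ᵥ y = x := by
    rw [hy, mulVec_mulVec, Matrix.mul_nonsing_inv _ hdet, one_mulVec]
  set a := x ⬝ᵥ y with ha
  have hkey : a = y ⬝ᵥ (M *ᵥ y) := by rw [ha, dotProduct_comm, hxy]
  have hq2 : (1 - δ) * ∑ j, y j ^ 2 ≤ a := hkey ▸ hq y
  have hCS : a ^ 2 ≤ (∑ j, y j ^ 2) * ∑ j, x j ^ 2 := by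
    have h5 := Finset.sum_mul_sq_le_sq_mul_sq Finset.univ y x
    rw [ha, dotProduct_comm]
    simpa [dotProduct] using h5
  have hnn : 0 ≤ a := by
    have h6 := hM.inv.posSemidef.dotProduct_mulVec_nonneg x
    simpa [ha, star_trivial] using h6
  have hx2 : (0:ℝ) ≤ ∑ j, x j ^ 2 := by positivity
  have hy2 : (0:ℝ) ≤ ∑ j, y j ^ 2 := by positivity
  show a ≤ _
  rcases eq_or_lt_of_le hnn with h0 | hpos
  · rw [← h0]; exact div_nonneg hx2 (by linarith)
  · rw [le_div_iff₀ (by linarith)]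
    nlinarith [mul_le_mul_of_nonneg_right hq2 hx2]

lemma det_bound {t : ℕ} {M : Matrix (Fin t) (Fin t) ℝ} (hM : M.PosDef) {δ : ℝ}
    (hq : ∀ y : Fin t → ℝ, y ⬝ᵥ (M *ᵥ y) ≤ (1 + δ) * ∑ j, y j ^ 2) :
    M.det ≤ (1 + δ) ^ t := by
  have hH : M.IsHermitian := hM.1
  have hev : ∀ i, hH.eigenvalues i ≤ 1 + δ := by
    intro i
    have h1 := hH.eigenvalues_eq i
    set v : Fin t → ℝ := ⇑(hH.eigenvectorBasis i) with hv
    have hnorm : ∑ j, v j ^ 2 = 1 := by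
      have h2 : ‖hH.eigenvectorBasis i‖ = 1 := hH.eigenvectorBasis.orthonormal.1 i
      have h3 := EuclideanSpace.norm_eq (hH.eigenvectorBasis i)
      rw [h2] at h3
      have h4 : (1:ℝ) = Real.sqrt (∑ j, ‖hH.eigenvectorBasis i j‖ ^ 2) := h3
      have h5 : ∑ j, ‖hH.eigenvectorBasis i j‖ ^ 2 = ∑ j, v j ^ 2 := by
        simp [hv, Real.norm_eq_abs, sq_abs]
      rw [h5] at h4
      nlinarith [Real.sq_sqrt (by positivity : (0:ℝ) ≤ ∑ j, v j ^ 2),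
        Real.sqrt_nonneg (∑ j, v j ^ 2)]
    have h6 : hH.eigenvalues i = v ⬝ᵥ (M *ᵥ v) := by
      simpa [star_trivial, dotProduct_comm] using h1
    rw [h6]
    calc v ⬝ᵥ (M *ᵥ v) ≤ (1 + δ) * ∑ j, v j ^ 2 := hq v
      _ = 1 + δ := by rw [hnorm, mul_one]
  have hpos : ∀ i, 0 ≤ hH.eigenvalues i := fun i => hM.posSemidef.eigenvalues_nonneg i
  have hdet : M.det = ∏ i, hH.eigenvalues i := by
    simpa using hH.det_eq_prod_eigenvalues
  rw [hdet]
  calc ∏ i, hH.eigenvalues i ≤ ∏ _i : Fin t, (1 + δ) :=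
        Finset.prod_le_prod (fun i _ => hpos i) (fun i _ => hev i)
    _ = (1 + δ) ^ t := by simp

lemma sqrt_pow_aux (x : ℝ) (hx : 0 ≤ x) (n : ℕ) :
    Real.sqrt (x ^ n) = (Real.sqrt x) ^ n := by
  induction n with
  | zero => simp
  | succ n ih => rw [pow_succ, pow_succ, Real.sqrt_mul (by positivity), ih]

/-- The centered Gaussian measure on `ℝ^t` with covariance matrix `M`, given by
its density `(2π)^{-t/2} (det M)^{-1/2} exp(-½ xᵀ M⁻¹ x)` with respect to
Lebesgue measure. -/
noncomputable def gaussMeasure (t : ℕ) (M : Matrix (Fin t) (Fin t) ℝ) :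
    Measure (Fin t → ℝ) :=
  volume.withDensity fun x => ENNReal.ofReal
    ((Real.sqrt ((2 * Real.pi) ^ t * M.det))⁻¹ *
      Real.exp (-(1 / 2) * (x ⬝ᵥ (M⁻¹ *ᵥ x))))

set_option maxHeartbeats 1000000 in
/-- **Orthant probabilities for a near-identity Gaussian.** If `M` is symmetric
positive-definite with unit diagonal and off-diagonal entries at most `1/t⁴` in
absolute value, then for any sign pattern `α ∈ {-1,1}^t` the Gaussian measure of
the corresponding open orthant is at least `(1 - 1/t) · 2^{-t}`. -/
theorem gaussian_orthant_lower_bound (t : ℕ) (ht : 2 ≤ t)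
    (M : Matrix (Fin t) (Fin t) ℝ) (hM : M.PosDef)
    (hdiag : ∀ j, M j j = 1)
    (hoff : ∀ j j', j ≠ j' → |M j j'| ≤ 1 / (t : ℝ) ^ 4)
    (α : Fin t → ℝ) (hα : ∀ j, α j = 1 ∨ α j = -1) :
    ENNReal.ofReal ((1 - 1 / (t : ℝ)) / 2 ^ t) ≤
      gaussMeasure t M {x | ∀ j, 0 < α j * x j} := by
  have ht2 : (2:ℝ) ≤ (t:ℝ) := by exact_mod_cast ht
  have htpos : (0:ℝ) < t := by linarith
  set δ : ℝ := 1 / (t:ℝ)^3 with hδdef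
  have hδpos : 0 < δ := by positivity
  have hδ8 : δ ≤ 1/8 := by
    have h8 : (2:ℝ)^3 ≤ (t:ℝ)^3 := pow_le_pow_left₀ (by norm_num) ht2 3
    rw [hδdef, div_le_div_iff₀ (by positivity) (by norm_num)]
    norm_num at h8 ⊢
    linarith
  have hδ1 : δ < 1 := by linarith
  -- entrywise deviation from identity
  have hent : ∀ i j, |M i j - if i = j then (1:ℝ) else 0| ≤ 1/(t:ℝ)^4 := by
    intro i j
    by_cases hij : i = j
    · subst hij; rw [hdiag i]; simp
    · simpa [hij] using hoff i j hij
  have hεt : 1/(t:ℝ)^4 * t = δ := by rw [hδdef]; field_simp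
  have hquad : ∀ x : Fin t → ℝ, |x ⬝ᵥ (M *ᵥ x) - ∑ j, x j ^ 2| ≤ δ * ∑ j, x j ^ 2 := by
    intro x
    have h := quad_dev M (by positivity) hent x
    rwa [hεt] at h
  have hlow : ∀ x : Fin t → ℝ, (1 - δ) * ∑ j, x j ^ 2 ≤ x ⬝ᵥ (M *ᵥ x) := by
    intro x; have h := abs_le.1 (hquad x); linarith [h.1]
  have hup : ∀ x : Fin t → ℝ, x ⬝ᵥ (M *ᵥ x) ≤ (1 + δ) * ∑ j, x j ^ 2 := by
    intro x; have h := abs_le.1 (hquad x); linarith [h.2]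
  have hinv := inv_quad_bound hM hδ1 hlow
  have hdet : M.det ≤ (1 + δ) ^ t := det_bound hM hup
  -- the one-dimensional comparison density
  set b : ℝ := 1 / (2 * (1 - δ)) with hb
  have hbpos : 0 < b := by rw [hb]; exact div_pos one_pos (by linarith)
  set g1 : ℝ → ℝ := fun y => Real.exp (-b * y^2) with hg1
  set c1 : ℝ := ((Real.sqrt (2 * Real.pi * (1 + δ)))⁻¹) ^ t with hc1
  have hc1pos : 0 < c1 := by
    rw [hc1]
    have : (0:ℝ) < 2 * Real.pi * (1 + δ) := by positivity
    positivity
  -- the orthant as a product set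
  set s : Fin t → Set ℝ := fun j => {y | 0 < α j * y} with hs
  have hsm : ∀ j, MeasurableSet (s j) := by
    intro j
    exact (measurable_const_mul (α j)) measurableSet_Ioi
  have hS : {x : Fin t → ℝ | ∀ j, 0 < α j * x j} = Set.pi Set.univ s := by
    ext x; simp [hs, Set.mem_pi]
  have hSm : MeasurableSet {x : Fin t → ℝ | ∀ j, 0 < α j * x j} := by
    rw [hS]; exact MeasurableSet.univ_pi hsm
  -- one-dimensional integrals
  have h1d : ∀ j, ∫ y in s j, g1 y = Real.sqrt (Real.pi / b) / 2 := by
    intro j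
    rcases hα j with h | h
    · have hsj : s j = Set.Ioi 0 := by ext y; simp [hs, h]
      rw [hsj, hg1]; exact integral_gaussian_Ioi b
    · have hsj : s j = Set.Iio 0 := by
        ext y; simp [hs, h]
      have hneg : (fun y : ℝ => g1 (-y)) = g1 := by funext y; simp [hg1, neg_sq]
      rw [hsj]
      calc ∫ y in Set.Iio (0:ℝ), g1 y = ∫ y in Set.Iic (0:ℝ), g1 y :=
            setIntegral_congr_set Iio_ae_eq_Iic
        _ = ∫ y in Set.Iic (0:ℝ), g1 (-y) := by rw [hneg]
        _ = ∫ y in Set.Ioi (-(0:ℝ)), g1 y := integral_comp_neg_Iic 0 g1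
        _ = Real.sqrt (Real.pi / b) / 2 := by
            rw [neg_zero, hg1]; exact integral_gaussian_Ioi b
  -- integrability
  have hg1int : Integrable g1 := integrable_exp_neg_mul_sq hbpos
  have hProdInt : Integrable (fun x : Fin t → ℝ => ∏ j, g1 (x j)) :=
    Integrable.fintype_prod (𝕜 := ℝ) (f := fun _ => g1) fun _ => hg1int
  -- indicator factorization
  have hind : ∀ x : Fin t → ℝ,
      (Set.pi Set.univ s).indicator (fun x : Fin t → ℝ => ∏ j, g1 (x j)) x
        = ∏ j, (s j).indicator g1 (x j) := by
    intro x
    by_cases hx : x ∈ Set.pi Set.univ s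
    · rw [Set.indicator_of_mem hx]
      exact Finset.prod_congr rfl fun j _ =>
        (Set.indicator_of_mem (hx j (Set.mem_univ j)) g1).symm
    · rw [Set.indicator_of_notMem hx]
      simp only [Set.mem_pi, Set.mem_univ, forall_true_left] at hx
      push_neg at hx
      obtain ⟨j, hj⟩ := hx
      exact (Finset.prod_eq_zero (Finset.mem_univ j)
        (Set.indicator_of_notMem hj g1)).symm
  -- value of the comparison integral
  have hIS : ∫ x in {x : Fin t → ℝ | ∀ j, 0 < α j * x j}, (c1 * ∏ j, g1 (x j))
      = c1 * (Real.sqrt (Real.pi / b) / 2) ^ t := by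
    rw [MeasureTheory.integral_const_mul]
    congr 1
    rw [hS, ← MeasureTheory.integral_indicator (MeasurableSet.univ_pi hsm)]
    simp_rw [hind]
    rw [MeasureTheory.volume_pi, MeasureTheory.integral_fintype_prod_eq_prod (𝕜 := ℝ)
      (f := fun j => (s j).indicator g1)]
    have hone : ∀ j : Fin t, ∫ y, (s j).indicator g1 y = Real.sqrt (Real.pi/b)/2 := by
      intro j; rw [MeasureTheory.integral_indicator (hsm j)]; exact h1d j
    rw [Finset.prod_congr rfl fun j _ => hone j, Finset.prod_const, Finset.card_univ,
      Fintype.card_fin]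
  -- pointwise density comparison
  have hdens : ∀ x : Fin t → ℝ,
      ENNReal.ofReal (c1 * ∏ j, g1 (x j)) ≤ ENNReal.ofReal
        ((Real.sqrt ((2 * Real.pi) ^ t * M.det))⁻¹ *
          Real.exp (-(1 / 2) * (x ⬝ᵥ (M⁻¹ *ᵥ x)))) := by
    intro x
    apply ENNReal.ofReal_le_ofReal
    have hprod : ∏ j, g1 (x j) = Real.exp (-(b * ∑ j, x j ^ 2)) := by
      show ∏ j, Real.exp (-b * (x j) ^ 2) = _
      rw [← Real.exp_sum]
      congr 1
      rw [Finset.mul_sum, ← Finset.sum_neg_distrib]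
      exact Finset.sum_congr rfl fun j _ => by ring
    have hc : c1 ≤ (Real.sqrt ((2 * Real.pi) ^ t * M.det))⁻¹ := by
      rw [hc1, inv_pow, ← sqrt_pow_aux _ (by positivity)]
      refine inv_anti₀ (Real.sqrt_pos.mpr (mul_pos (by positivity) hM.det_pos)) ?_
      refine Real.sqrt_le_sqrt ?_
      calc (2 * Real.pi) ^ t * M.det ≤ (2 * Real.pi) ^ t * (1 + δ) ^ t :=
            mul_le_mul_of_nonneg_left hdet (by positivity)
        _ = (2 * Real.pi * (1 + δ)) ^ t := (mul_pow (2*Real.pi) (1+δ) t).symm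
    have hexp : Real.exp (-(b * ∑ j, x j ^ 2))
        ≤ Real.exp (-(1/2) * (x ⬝ᵥ (M⁻¹ *ᵥ x))) := by
      apply Real.exp_le_exp.2
      have h := hinv x
      have h1δ : (0:ℝ) < 1 - δ := by linarith
      rw [le_div_iff₀ h1δ] at h
      rw [hb]
      have h2 : (1:ℝ)/2 * (x ⬝ᵥ (M⁻¹ *ᵥ x)) ≤ 1 / (2 * (1 - δ)) * ∑ j, x j ^ 2 := by
        rw [one_div_mul_eq_div, one_div_mul_eq_div,
          div_le_div_iff₀ (by norm_num : (0:ℝ) < 2) (by linarith : (0:ℝ) < 2*(1-δ))]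
        nlinarith [h]
      linarith
    calc c1 * ∏ j, g1 (x j) = c1 * Real.exp (-(b * ∑ j, x j ^ 2)) := by rw [hprod]
      _ ≤ (Real.sqrt ((2 * Real.pi) ^ t * M.det))⁻¹
            * Real.exp (-(1/2) * (x ⬝ᵥ (M⁻¹ *ᵥ x))) :=
          mul_le_mul hc hexp (Real.exp_pos _).le
            (inv_nonneg.mpr (Real.sqrt_nonneg _))
  -- final arithmetic
  have harith : (1 - 1/(t:ℝ))/2^t ≤ c1 * (Real.sqrt (Real.pi / b) / 2) ^ t := by
    have hπb : Real.pi / b = 2 * Real.pi * (1 - δ) := by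
      rw [hb]; field_simp
    set r : ℝ := (1 - δ) / (1 + δ) with hr
    have hinner : (Real.sqrt (2 * Real.pi * (1 + δ)))⁻¹ * Real.sqrt (Real.pi / b)
        = Real.sqrt r := by
      rw [hπb, ← Real.sqrt_inv, ← Real.sqrt_mul (by positivity)]
      congr 1
      rw [hr]
      field_simp
    have hrt : (1 - 1/(t:ℝ))^2 ≤ r ^ t := by
      have hr1 : 1 - 2*δ ≤ r := by
        rw [hr, le_div_iff₀ (by linarith)]
        nlinarith
      have hBer : 1 + (t:ℝ) * (-(2*δ)) ≤ (1 + (-(2*δ)))^t :=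
        one_add_mul_le_pow (by linarith) t
      have hpow : (1 - 2*δ)^t ≤ r ^ t :=
        pow_le_pow_left₀ (by linarith) hr1 t
      have htδ : (t:ℝ) * δ = 1/(t:ℝ)^2 := by
        rw [hδdef]; field_simp
      have hfin : (1 - 1/(t:ℝ))^2 ≤ 1 - 2/(t:ℝ)^2 := by
        have e1 : (1 - 1/(t:ℝ))^2 = ((t:ℝ)-1)^2/(t:ℝ)^2 := by field_simp
        have e2 : 1 - 2/(t:ℝ)^2 = ((t:ℝ)^2-2)/(t:ℝ)^2 := by field_simp
        have base : ((t:ℝ)-1)^2 ≤ (t:ℝ)^2 - 2 := by nlinarith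
        rw [e1, e2]
        exact (div_le_div_iff_of_pos_right (by positivity)).mpr base
      have h2t : 1 - 2/(t:ℝ)^2 = 1 + (t:ℝ) * (-(2*δ)) := by
        rw [hδdef]; field_simp; ring
      calc (1 - 1/(t:ℝ))^2 ≤ 1 - 2/(t:ℝ)^2 := hfin
        _ = 1 + (t:ℝ) * (-(2*δ)) := h2t
        _ ≤ (1 + (-(2*δ)))^t := hBer
        _ = (1 - 2*δ)^t := by ring_nf
        _ ≤ r ^ t := hpow
    have hval : c1 * (Real.sqrt (Real.pi / b) / 2) ^ t
        = Real.sqrt (r ^ t) / 2 ^ t := by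
      have hrnn : (0:ℝ) ≤ r := by
        rw [hr]; exact div_nonneg (by linarith) (by linarith)
      rw [hc1, div_pow, sqrt_pow_aux _ hrnn, ← hinner, mul_pow]
      ring
    rw [hval]
    exact (div_le_div_iff_of_pos_right (by positivity : (0:ℝ) < 2^t)).mpr (Real.le_sqrt_of_sq_le hrt)
  -- putting everything together
  calc ENNReal.ofReal ((1 - 1 / (t : ℝ)) / 2 ^ t)
      ≤ ENNReal.ofReal (c1 * (Real.sqrt (Real.pi / b) / 2) ^ t) :=
        ENNReal.ofReal_le_ofReal harith
    _ = ENNReal.ofReal (∫ x in {x : Fin t → ℝ | ∀ j, 0 < α j * x j},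
          (c1 * ∏ j, g1 (x j))) := by rw [hIS]
    _ = ∫⁻ x in {x : Fin t → ℝ | ∀ j, 0 < α j * x j},
          ENNReal.ofReal (c1 * ∏ j, g1 (x j)) := by
        refine MeasureTheory.ofReal_integral_eq_lintegral_ofReal ?_ ?_
        · exact (hProdInt.const_mul c1).integrableOn
        · refine Filter.Eventually.of_forall fun x => ?_
          have : ∀ j, 0 < g1 (x j) := fun j => Real.exp_pos _
          positivity
    _ ≤ ∫⁻ x in {x : Fin t → ℝ | ∀ j, 0 < α j * x j},
          ENNReal.ofReal ((Real.sqrt ((2 * Real.pi) ^ t * M.det))⁻¹ *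
            Real.exp (-(1 / 2) * (x ⬝ᵥ (M⁻¹ *ᵥ x)))) :=
        lintegral_mono fun x => hdens x
    _ = gaussMeasure t M {x | ∀ j, 0 < α j * x j} := by
        rw [gaussMeasure, withDensity_apply _ hSm]
end

section
/- There exists K₀ ∈ ℕ such that for every k ≥ K₀ and every integer i with k^{3/4} ≤ i ≤ k the following holds: if b_1, …, b_k are i.i.d. Uniform[0,1], then the probability that at least i of the b_j satisfy b_j ≤ 7i/(8k) is at most 32/√k. -/
open MeasureTheory Filter

/-- The joint law of `k` i.i.d. `Uniform[0,1]` random variables. -/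
noncomputable def uniformBiases (k : ℕ) : Measure (Fin k → ℝ) :=
  Measure.pi fun _ => volume.restrict (Set.Icc (0:ℝ) 1)

instance : IsProbabilityMeasure (volume.restrict (Set.Icc (0:ℝ) 1)) :=
  ⟨by simp [Real.volume_Icc]⟩

instance (k : ℕ) : IsProbabilityMeasure (uniformBiases k) := by
  unfold uniformBiases; infer_instance

lemma uB_eval_preimage (k : ℕ) (j : Fin k) (A : Set ℝ) :
    uniformBiases k ((fun b => b j) ⁻¹' A) = volume.restrict (Set.Icc (0:ℝ) 1) A := by
  classical
  have hset : ((fun b : Fin k → ℝ => b j) ⁻¹' A)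
      = Set.pi Set.univ (fun i => if i = j then A else Set.univ) := by
    ext b
    simp only [Set.mem_preimage, Set.mem_pi, Set.mem_univ, true_implies]
    constructor
    · intro h i
      by_cases hij : i = j
      · subst hij; simp [h]
      · simp [hij]
    · intro h
      have := h j
      simpa using this
  rw [uniformBiases, hset, Measure.pi_pi]
  have : ∀ i : Fin k, (volume.restrict (Set.Icc (0:ℝ) 1)) (if i = j then A else Set.univ)
      = if i = j then (volume.restrict (Set.Icc (0:ℝ) 1)) A else 1 := by
    intro i; by_cases hij : i = j <;> simp [hij]
  simp_rw [this]
  simp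

lemma uB_eval_indep (k : ℕ) {j j' : Fin k} (h : j ≠ j') :
    ProbabilityTheory.IndepFun (fun b : Fin k → ℝ => b j) (fun b => b j')
      (uniformBiases k) := by
  classical
  rw [ProbabilityTheory.indepFun_iff_measure_inter_preimage_eq_mul]
  intro s t _ _
  set ν := volume.restrict (Set.Icc (0:ℝ) 1)
  have hset : ((fun b : Fin k → ℝ => b j) ⁻¹' s ∩ (fun b => b j') ⁻¹' t)
      = Set.pi Set.univ (fun i => if i = j then s else if i = j' then t else Set.univ) := by
    ext b
    simp only [Set.mem_inter_iff, Set.mem_preimage, Set.mem_pi, Set.mem_univ, true_implies]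
    constructor
    · rintro ⟨h1, h2⟩ i
      by_cases hij : i = j
      · subst hij; simp [h1]
      · by_cases hij' : i = j'
        · subst hij'; simp [hij, h2]
        · simp [hij, hij']
    · intro hb
      have h1 := hb j
      have h2 := hb j'
      simp [h.symm] at h1 h2
      exact ⟨h1, h2⟩
  rw [hset, uniformBiases, Measure.pi_pi]
  have hprod : ∀ i : Fin k, ν (if i = j then s else if i = j' then t else Set.univ)
      = (if i = j then ν s else 1) * (if i = j' then ν t else 1) := by
    intro i
    split_ifs <;> simp_all
  rw [show volume.restrict (Set.Icc (0:ℝ) 1) = ν from rfl]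
  simp_rw [hprod]
  rw [Finset.prod_mul_distrib, Finset.prod_ite_eq' Finset.univ j (fun _ => ν s),
    Finset.prod_ite_eq' Finset.univ j' (fun _ => ν t)]
  simp only [Finset.mem_univ, if_true]
  rw [show (Measure.pi fun _ : Fin k => volume.restrict (Set.Icc (0:ℝ) 1)) = uniformBiases k from rfl,
    uB_eval_preimage, uB_eval_preimage]

open ProbabilityTheory

/-- For all large `k` and every `i` with `k^{3/4} ≤ i ≤ k`, the probability that
at least `i` of `k` i.i.d. `Uniform[0,1]` samples are `≤ 7i/(8k)` (i.e. the
`i`-th order statistic is at most `7i/(8k)`) is at most `32/√k`. -/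
theorem order_statistic_lower_deviation :
    ∃ K₀ : ℕ, ∀ k : ℕ, K₀ ≤ k → ∀ i : ℕ, (k : ℝ) ^ ((3 : ℝ) / 4) ≤ i → i ≤ k →
      uniformBiases k
          {b | i ≤ (Finset.univ.filter fun j : Fin k =>
            b j ≤ 7 * i / (8 * k)).card} ≤
        ENNReal.ofReal (32 / Real.sqrt k) := by
  classical
  use 2401
  intro k hk i hi₁ hi₂
  have hk0 : 0 < k := lt_of_lt_of_le (by norm_num) hk
  have hkR : (0:ℝ) < k := by exact_mod_cast hk0
  have hi0 : 0 < i := by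
    rcases Nat.eq_zero_or_pos i with h | h
    · exfalso
      have : (0:ℝ) < (k:ℝ) ^ ((3:ℝ)/4) := Real.rpow_pos_of_pos hkR _
      rw [h] at hi₁; push_cast at hi₁; linarith
    · exact h
  have hiR : (0:ℝ) < i := by exact_mod_cast hi0
  set p : ℝ := 7 * i / (8 * k) with hp
  have hp0 : 0 ≤ p := by positivity
  have hp1 : p ≤ 1 := by
    rw [hp, div_le_one (by positivity)]
    have : (i:ℝ) ≤ k := by exact_mod_cast hi₂
    linarith
  set μ := uniformBiases k with hμ
  -- the indicator functions
  set f : ℝ → ℝ := Set.indicator (Set.Iic p) (fun _ => (1:ℝ)) with hf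
  have hfmeas : Measurable f := measurable_const.indicator measurableSet_Iic
  set Y : Fin k → (Fin k → ℝ) → ℝ := fun j b => f (b j) with hYdef
  have hScomp : ∀ j : Fin k, Y j
      = Set.indicator ((fun b : Fin k → ℝ => b j) ⁻¹' Set.Iic p) (fun _ => (1:ℝ)) := by
    intro j; funext b
    simp [hYdef, hf, Set.indicator_apply]
  have hSmeas : ∀ j : Fin k, MeasurableSet ((fun b : Fin k → ℝ => b j) ⁻¹' Set.Iic p) :=
    fun j => (measurable_pi_apply j) measurableSet_Iic
  have hYmem : ∀ j, MemLp (Y j) 2 μ := by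
    intro j
    rw [hScomp j]
    exact memLp_indicator_const 2 (hSmeas j) 1 (Or.inr (measure_lt_top _ _).ne)
  -- measure of one-coordinate event
  have hmeasS : ∀ j : Fin k, μ ((fun b : Fin k → ℝ => b j) ⁻¹' Set.Iic p)
      = ENNReal.ofReal p := by
    intro j
    rw [hμ, uB_eval_preimage k j, Measure.restrict_apply measurableSet_Iic]
    have : Set.Iic p ∩ Set.Icc (0:ℝ) 1 = Set.Icc 0 p := by
      ext x
      simp only [Set.mem_inter_iff, Set.mem_Iic, Set.mem_Icc]
      constructor
      · rintro ⟨h1, h2, _⟩; exact ⟨h2, h1⟩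
      · rintro ⟨h1, h2⟩; exact ⟨h2, h1, h2.trans hp1⟩
    rw [this, Real.volume_Icc, sub_zero]
  have hEY : ∀ j : Fin k, μ[Y j] = p := by
    intro j
    rw [hScomp j, integral_indicator_const (1:ℝ) (hSmeas j), measureReal_def, hmeasS j,
      ENNReal.toReal_ofReal hp0, smul_eq_mul, mul_one]
  -- variance bound
  have hVarY : ∀ j : Fin k, variance (Y j) μ ≤ p := by
    intro j
    have hsq : Y j ^ 2 = Y j := by
      funext b
      simp only [Pi.pow_apply, hYdef, hf, Set.indicator_apply]
      split_ifs <;> norm_num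
    calc variance (Y j) μ ≤ μ[Y j ^ 2] :=
          variance_le_expectation_sq (hYmem j).aestronglyMeasurable
      _ = p := by rw [hsq, hEY j]
  -- pairwise independence
  have hindep : Set.Pairwise ↑(Finset.univ : Finset (Fin k))
      (fun j j' => IndepFun (Y j) (Y j') μ) := by
    intro j _ j' _ hjj'
    exact (uB_eval_indep k hjj').comp hfmeas hfmeas
  -- the sum
  set X : (Fin k → ℝ) → ℝ := ∑ j : Fin k, Y j with hX
  have hXmem : MemLp X 2 μ := memLp_finset_sum' _ (fun j _ => hYmem j)
  have hEX : μ[X] = 7 * (i:ℝ) / 8 := by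
    rw [hX]
    have : μ[∑ j : Fin k, Y j] = ∑ j : Fin k, μ[Y j] := by
      rw [← integral_finset_sum Finset.univ (fun j _ => (hYmem j).integrable one_le_two)]
      congr 1
      funext b
      simp
    rw [this]
    simp only [hEY, Finset.sum_const, Finset.card_univ, Fintype.card_fin, nsmul_eq_mul]
    rw [hp]
    field_simp
  have hVarX : variance X μ ≤ 7 * i / 8 := by
    rw [hX, IndepFun.variance_sum (fun j _ => hYmem j) hindep]
    calc ∑ j : Fin k, variance (Y j) μ ≤ ∑ j : Fin k, p :=
          Finset.sum_le_sum (fun j _ => hVarY j)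
      _ = k * p := by simp [mul_comm]
      _ = 7 * i / 8 := by rw [hp]; field_simp
  -- event inclusion
  have hXval : ∀ b : Fin k → ℝ, X b = ((Finset.univ.filter fun j : Fin k =>
      b j ≤ 7 * i / (8 * k)).card : ℝ) := by
    intro b
    rw [hX]
    have : (∑ j : Fin k, Y j) b = ∑ j : Fin k, (if b j ≤ p then (1:ℝ) else 0) := by
      simp [hYdef, hf, Set.indicator_apply]
    rw [this, Finset.sum_boole]
  have hsub : {b : Fin k → ℝ | i ≤ (Finset.univ.filter fun j : Fin k =>
        b j ≤ 7 * i / (8 * k)).card}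
      ⊆ {b | (i:ℝ)/8 ≤ |X b - μ[X]|} := by
    intro b hb
    simp only [Set.mem_setOf_eq] at hb ⊢
    have h1 : (i:ℝ) ≤ X b := by
      rw [hXval b]
      exact_mod_cast hb
    rw [hEX]
    rw [abs_of_nonneg (by linarith)]
    linarith
  -- Chebyshev
  have hc : (0:ℝ) < (i:ℝ)/8 := by positivity
  calc μ {b | i ≤ (Finset.univ.filter fun j : Fin k =>
          b j ≤ 7 * i / (8 * k)).card}
      ≤ μ {b | (i:ℝ)/8 ≤ |X b - μ[X]|} := measure_mono hsub
    _ ≤ ENNReal.ofReal (variance X μ / ((i:ℝ)/8) ^ 2) :=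
          meas_ge_le_variance_div_sq hXmem hc
    _ ≤ ENNReal.ofReal (32 / Real.sqrt k) := by
        apply ENNReal.ofReal_le_ofReal
        have h56 : variance X μ / ((i:ℝ)/8) ^ 2 ≤ 56 / i := by
          rw [div_le_div_iff₀ (by positivity) hiR]
          have hv0 : 0 ≤ variance X μ := variance_nonneg _ _
          nlinarith [hVarX]
        refine h56.trans ?_
        -- 56 / i ≤ 32 / √k
        have hsqrt : Real.sqrt k = (k:ℝ) ^ ((1:ℝ)/2) := Real.sqrt_eq_rpow _
        have hsplit : (k:ℝ) ^ ((3:ℝ)/4) = (k:ℝ) ^ ((1:ℝ)/2) * (k:ℝ) ^ ((1:ℝ)/4) := by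
          rw [← Real.rpow_add hkR]; norm_num
        have h7 : (7:ℝ) ≤ (k:ℝ) ^ ((1:ℝ)/4) := by
          have h1 : (2401:ℝ) ≤ k := by exact_mod_cast hk
          calc (7:ℝ) = ((2401:ℝ)) ^ ((1:ℝ)/4) := by
                rw [show (2401:ℝ) = (7:ℝ)^(4:ℕ) by norm_num, ← Real.rpow_natCast 7 4,
                  ← Real.rpow_mul (by norm_num)]
                norm_num
            _ ≤ (k:ℝ) ^ ((1:ℝ)/4) := Real.rpow_le_rpow (by norm_num) h1 (by norm_num)
        have hs0 : (0:ℝ) < Real.sqrt k := Real.sqrt_pos.mpr hkR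
        rw [div_le_div_iff₀ hiR hs0]
        have h2 : (k:ℝ) ^ ((1:ℝ)/2) * 7 ≤ (i:ℝ) := by
          calc (k:ℝ) ^ ((1:ℝ)/2) * 7 ≤ (k:ℝ) ^ ((1:ℝ)/2) * (k:ℝ) ^ ((1:ℝ)/4) := by
                have : (0:ℝ) ≤ (k:ℝ) ^ ((1:ℝ)/2) := (Real.rpow_pos_of_pos hkR _).le
                nlinarith
            _ = (k:ℝ) ^ ((3:ℝ)/4) := hsplit.symm
            _ ≤ i := hi₁
        rw [hsqrt]
        nlinarith [Real.rpow_pos_of_pos hkR ((1:ℝ)/2)]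
end

section
/- There exists K₀ ∈ ℕ such that for every k ≥ K₀ and every integer i with k^{3/4} ≤ i ≤ k the following holds: if b_1, …, b_k are i.i.d. Uniform[0,1], then the probability that fewer than ⌊i/2⌋ of the b_j satisfy b_j < 5i/(8k) is at most 32/√k. -/
open MeasureTheory Filter
open scoped ProbabilityTheory

lemma pi_measure_iInter_eval {ι : Type*} [Fintype ι] {α : ι → Type*}
    [∀ i, MeasurableSpace (α i)] (μ : ∀ i, Measure (α i)) [∀ i, IsProbabilityMeasure (μ i)]
    (S : Finset ι) (sets : ∀ i, Set (α i)) :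
    Measure.pi μ (⋂ i ∈ S, (fun x => x i) ⁻¹' sets i) = ∏ i ∈ S, μ i (sets i) := by
  classical
  have h1 : (⋂ i ∈ S, (fun x : ∀ j, α j => x i) ⁻¹' sets i)
      = Set.pi Set.univ (fun i => if i ∈ S then sets i else Set.univ) := by
    ext x
    simp only [Set.mem_iInter, Set.mem_preimage, Set.mem_pi, Set.mem_univ, true_implies]
    constructor
    · intro h i
      split_ifs with hi
      · exact h i hi
      · trivial
    · intro h i hi
      have := h i
      rwa [if_pos hi] at this
  rw [h1, Measure.pi_pi]
  rw [Finset.prod_congr rfl (g := fun i => if i ∈ S then μ i (sets i) else 1)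
    (fun i _ => by by_cases h : i ∈ S <;> simp [h])]
  rw [Finset.prod_ite_mem, Finset.univ_inter]

lemma iIndepFun_eval {ι : Type*} [Fintype ι] {α : ι → Type*}
    [∀ i, MeasurableSpace (α i)] (μ : ∀ i, Measure (α i)) [∀ i, IsProbabilityMeasure (μ i)] :
    ProbabilityTheory.iIndepFun (fun i (x : ∀ j, α j) => x i)
      (Measure.pi μ) := by
  rw [ProbabilityTheory.iIndepFun_iff_measure_inter_preimage_eq_mul]
  intro S sets _
  rw [pi_measure_iInter_eval μ S sets]
  exact Finset.prod_congr rfl fun i _ => by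
    simpa using (pi_measure_iInter_eval μ {i} sets).symm

instance inst_s15 : IsProbabilityMeasure (volume.restrict (Set.Icc (0:ℝ) 1)) := by
  constructor
  rw [Measure.restrict_apply_univ, Real.volume_Icc]
  norm_num

instance inst_s15_2 (k : ℕ) : IsProbabilityMeasure (uniformBiases k) := by
  unfold uniformBiases; infer_instance

/-- For all large `k` and every `i` with `k^{3/4} ≤ i ≤ k`, the probability that
fewer than `⌊i/2⌋` of `k` i.i.d. `Uniform[0,1]` samples are `< 5i/(8k)` (i.e. the
`⌊i/2⌋`-th order statistic is at least `5i/(8k)`) is at most `32/√k`. -/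
theorem order_statistic_upper_deviation :
    ∃ K₀ : ℕ, ∀ k : ℕ, K₀ ≤ k → ∀ i : ℕ, (k : ℝ) ^ ((3 : ℝ) / 4) ≤ i → i ≤ k →
      uniformBiases k
          {b | (Finset.univ.filter fun j : Fin k =>
            b j < 5 * i / (8 * k)).card < i / 2} ≤
        ENNReal.ofReal (32 / Real.sqrt k) := by
  classical
  use 16
  intro k hk i hi1 hi2
  have hk0 : (0:ℝ) < k := by
    have : (16:ℝ) ≤ k := by exact_mod_cast hk
    linarith
  have hi0 : (0:ℝ) < i := lt_of_lt_of_le (Real.rpow_pos_of_pos hk0 _) hi1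
  set μ := uniformBiases k with hμ
  set p : ℝ := 5 * i / (8 * k) with hp
  have hp0 : 0 ≤ p := by positivity
  have hp1 : p ≤ 1 := by
    rw [hp, div_le_one (by positivity)]
    have : (i:ℝ) ≤ k := by exact_mod_cast hi2
    linarith
  set X : Fin k → (Fin k → ℝ) → ℝ := fun j b => if b j < p then 1 else 0 with hX
  have hmeas : ∀ j, Measurable (X j) := fun j =>
    Measurable.ite (measurableSet_lt (measurable_pi_apply j) measurable_const)
      measurable_const measurable_const
  have hmem : ∀ j, MemLp (X j) 2 μ := fun j =>
    MemLp.of_bound (hmeas j).aestronglyMeasurable 1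
      (Filter.Eventually.of_forall fun b => by
        simp only [hX]; split_ifs <;> simp)
  -- measure of the preimage
  have hAmeas : ∀ j : Fin k, μ ((fun b : Fin k → ℝ => b j) ⁻¹' Set.Iio p)
      = ENNReal.ofReal p := by
    intro j
    have h1 := pi_measure_iInter_eval (fun _ : Fin k => volume.restrict (Set.Icc (0:ℝ) 1))
      {j} (fun _ => Set.Iio p)
    simp only [Finset.mem_singleton, Set.iInter_iInter_eq_left, Finset.prod_singleton] at h1
    rw [hμ, uniformBiases]
    rw [h1, Measure.restrict_apply measurableSet_Iio]
    have hset : Set.Iio p ∩ Set.Icc (0:ℝ) 1 = Set.Ico 0 p := by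
      ext x
      simp only [Set.mem_inter_iff, Set.mem_Iio, Set.mem_Icc, Set.mem_Ico]
      constructor
      · rintro ⟨h1, h2, _⟩; exact ⟨h2, h1⟩
      · rintro ⟨h1, h2⟩; exact ⟨h2, h1, le_of_lt (lt_of_lt_of_le h2 hp1)⟩
    rw [hset, Real.volume_Ico, sub_zero]
  -- expectation of each X j
  have hXind : ∀ j, X j = Set.indicator ((fun b : Fin k → ℝ => b j) ⁻¹' Set.Iio p)
      (fun _ => (1:ℝ)) := by
    intro j; ext b
    simp [hX, Set.indicator_apply, Set.mem_Iio]
  have hint : ∀ j, ∫ b, X j b ∂μ = p := by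
    intro j
    rw [hXind j]
    rw [show (fun _ : Fin k → ℝ => (1:ℝ)) = (1 : (Fin k → ℝ) → ℝ) from rfl]
    rw [integral_indicator_one ((measurable_pi_apply j) measurableSet_Iio)]
    rw [measureReal_def, hAmeas j, ENNReal.toReal_ofReal hp0]
  -- variance of each X j
  have hsq : ∀ j, (X j) ^ 2 = X j := by
    intro j; ext b
    simp only [Pi.pow_apply, hX]
    split_ifs <;> norm_num
  have hvar : ∀ j, ProbabilityTheory.variance (X j) μ = p - p ^ 2 := by
    intro j
    rw [ProbabilityTheory.variance_eq_sub (hmem j), hsq j, hint j]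
  -- independence
  have hind : ProbabilityTheory.iIndepFun X μ := by
    have h0 := iIndepFun_eval (fun _ : Fin k => volume.restrict (Set.Icc (0:ℝ) 1))
    have h1 := h0.comp (fun _ (x : ℝ) => if x < p then (1:ℝ) else 0)
      (fun _ => Measurable.ite measurableSet_Iio measurable_const measurable_const)
    exact h1
  -- variance of the sum
  have hvarsum : ProbabilityTheory.variance (∑ j, X j) μ = k * (p - p ^ 2) := by
    rw [ProbabilityTheory.IndepFun.variance_sum (fun j _ => hmem j)
      (fun j _ l _ hjl => hind.indepFun hjl)]
    simp [hvar, Finset.card_univ]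
    ring
  -- expectation of the sum
  have hES : ∫ x, (∑ j, X j) x ∂μ = 5 * i / 8 := by
    simp_rw [Finset.sum_apply]
    rw [integral_finset_sum _ (fun j _ => ((hmem j).integrable one_le_two))]
    simp only [hint, Finset.sum_const, Finset.card_univ, Fintype.card_fin, nsmul_eq_mul]
    rw [hp]
    field_simp
  -- Chebyshev
  have hc : (0:ℝ) < i / 8 := by linarith
  have cheb := ProbabilityTheory.meas_ge_le_variance_div_sq (μ := μ)
    (X := ∑ j, X j) (memLp_finset_sum' Finset.univ fun j _ => hmem j) hc
  -- event inclusion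
  have hsub : {b : Fin k → ℝ | (Finset.univ.filter fun j : Fin k =>
      b j < 5 * i / (8 * k)).card < i / 2}
      ⊆ {b : Fin k → ℝ | (i:ℝ) / 8 ≤ |(∑ j, X j) b - ∫ x, (∑ j, X j) x ∂μ|} := by
    intro b hb
    simp only [Set.mem_setOf_eq] at hb ⊢
    have hSb : (∑ j, X j) b = ((Finset.univ.filter fun j : Fin k =>
        b j < 5 * i / (8 * k)).card : ℝ) := by
      rw [Finset.sum_apply b Finset.univ X]
      simp only [hX, hp]
      rw [Finset.sum_boole]
    have hcard : ((Finset.univ.filter fun j : Fin k =>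
        b j < 5 * i / (8 * k)).card : ℝ) < (i:ℝ) / 2 := by
      calc ((Finset.univ.filter fun j : Fin k => b j < 5 * i / (8 * k)).card : ℝ)
          < ((i / 2 : ℕ) : ℝ) := by exact_mod_cast hb
        _ ≤ (i:ℝ) / 2 := by
            have := Nat.cast_div_le (α := ℝ) (m := i) (n := 2)
            simpa using this
    rw [hES, hSb]
    rw [le_abs]
    right
    rw [neg_sub]
    linarith
  refine le_trans (measure_mono hsub) (le_trans cheb ?_)
  apply ENNReal.ofReal_le_ofReal
  rw [hvarsum]
  have hkp : (k:ℝ) * (p - p ^ 2) ≤ 5 * i / 8 := by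
    have h1 : (k:ℝ) * p = 5 * i / 8 := by rw [hp]; field_simp
    have h2 : (k:ℝ) * (p - p ^ 2) ≤ (k:ℝ) * p := by nlinarith
    linarith
  have hA : (k:ℝ) * (p - p ^ 2) / ((i:ℝ) / 8) ^ 2 ≤ 40 / i := by
    have h40 : (5 * (i:ℝ) / 8) / ((i:ℝ) / 8) ^ 2 = 40 / i := by
      field_simp
      ring
    rw [← h40]
    gcongr
  refine le_trans hA ?_
  -- 40 / i ≤ 32 / √k
  have hsqk : (0:ℝ) < Real.sqrt k := Real.sqrt_pos.2 hk0
  have h16 : (16:ℝ) ≤ k := by exact_mod_cast hk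
  have hq2 : (2:ℝ) ≤ (k:ℝ) ^ ((1:ℝ)/4) := by
    have hle : (16:ℝ) ^ ((1:ℝ)/4) ≤ (k:ℝ) ^ ((1:ℝ)/4) :=
      Real.rpow_le_rpow (by norm_num) h16 (by norm_num)
    have heq : (16:ℝ) ^ ((1:ℝ)/4) = 2 := by
      rw [show (16:ℝ) = 2 ^ (4:ℕ) by norm_num, ← Real.rpow_natCast 2 4,
        ← Real.rpow_mul (by norm_num : (0:ℝ) ≤ 2)]
      norm_num
    linarith
  have hsplit : (k:ℝ) ^ ((3:ℝ)/4) = Real.sqrt k * (k:ℝ) ^ ((1:ℝ)/4) := by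
    rw [Real.sqrt_eq_rpow, ← Real.rpow_add hk0]
    norm_num
  have hi2sqrt : 2 * Real.sqrt k ≤ (i:ℝ) := by
    have : 2 * Real.sqrt k ≤ Real.sqrt k * (k:ℝ) ^ ((1:ℝ)/4) := by
      nlinarith [Real.sqrt_nonneg (k:ℝ), hq2]
    calc 2 * Real.sqrt k ≤ Real.sqrt k * (k:ℝ) ^ ((1:ℝ)/4) := this
      _ = (k:ℝ) ^ ((3:ℝ)/4) := hsplit.symm
      _ ≤ i := hi1
  rw [div_le_div_iff₀ hi0 hsqk]
  nlinarith [Real.sqrt_nonneg k]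
end

section
/- There exists K₀ ∈ ℕ such that for every k ≥ K₀ and every integer i with k^{3/4} ≤ i ≤ k the following holds: if b_1, …, b_k are i.i.d. Uniform[0,1] and b_{(1)} ≤ b_{(2)} ≤ ⋯ ≤ b_{(k)} denotes their nondecreasing rearrangement (order statistics), then with probability at least 1 − 64/√k one has ∑_{ι=1}^{i−1} (b_{(i)} − b_{(ι)})² ≥ i³/(32k²). -/
open MeasureTheory Filter
open Set ProbabilityTheory

/-- The nondecreasing rearrangement (order statistics) of `b`: `sortedTuple b j`
is the `(j+1)`-th smallest of the `b`'s. -/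
noncomputable def sortedTuple {k : ℕ} (b : Fin k → ℝ) : Fin k → ℝ :=
  b ∘ Tuple.sort b

lemma unif_prob : IsProbabilityMeasure (volume.restrict (Set.Icc (0:ℝ) 1)) :=
  ⟨by simp [Real.volume_Icc]⟩

instance ub_prob (k : ℕ) : IsProbabilityMeasure (uniformBiases k) := by
  haveI := unif_prob
  unfold uniformBiases
  infer_instance

lemma unif_Iic {t : ℝ} (h0 : 0 ≤ t) (h1 : t ≤ 1) :
    (volume.restrict (Set.Icc (0:ℝ) 1)) (Set.Iic t) = ENNReal.ofReal t := by
  rw [Measure.restrict_apply measurableSet_Iic]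
  have : Set.Iic t ∩ Set.Icc (0:ℝ) 1 = Set.Icc 0 t := by
    ext x
    simp only [Set.mem_inter_iff, Set.mem_Iic, Set.mem_Icc]
    constructor
    · rintro ⟨hx, hx0, _⟩; exact ⟨hx0, hx⟩
    · rintro ⟨hx0, hx⟩; exact ⟨hx, hx0, hx.trans h1⟩
  rw [this, Real.volume_Icc, sub_zero]

lemma eval_preimage_measure {k : ℕ} (j : Fin k) {A : Set ℝ} (hA : MeasurableSet A) :
    uniformBiases k (Function.eval j ⁻¹' A) = (volume.restrict (Set.Icc (0:ℝ) 1)) A := by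
  haveI := unif_prob
  rw [uniformBiases, ← Set.univ_pi_update_univ, Measure.pi_pi]
  rw [Finset.prod_eq_single j]
  · rw [Function.update_self]
  · intro l _ hl
    rw [Function.update_of_ne hl, measure_univ]
  · intro h; exact absurd (Finset.mem_univ j) h

lemma indep_eval {k : ℕ} {i j : Fin k} (hij : i ≠ j) :
    IndepFun (Function.eval i) (Function.eval j) (uniformBiases k) := by
  haveI := unif_prob
  rw [indepFun_iff_measure_inter_preimage_eq_mul]
  intro A B hA hB
  rw [eval_preimage_measure i hA, eval_preimage_measure j hB]
  have hset : Function.eval i ⁻¹' A ∩ Function.eval j ⁻¹' B =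
      Set.pi Set.univ (fun l => if l = i then A else if l = j then B else Set.univ) := by
    ext x
    simp only [Set.mem_inter_iff, Set.mem_preimage, Function.eval, Set.mem_pi, Set.mem_univ,
      true_implies]
    constructor
    · rintro ⟨h1, h2⟩ l
      split_ifs with hli hlj
      · subst hli; exact h1
      · subst hlj; exact h2
      · trivial
    · intro h
      refine ⟨?_, ?_⟩
      · have := h i; simpa using this
      · have := h j; rw [if_neg (Ne.symm hij), if_pos rfl] at this; exact this
  rw [hset, uniformBiases, Measure.pi_pi]
  rw [Finset.prod_eq_mul_of_mem i j (Finset.mem_univ i) (Finset.mem_univ j) hij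
    (by intro l _ hl; simp [hl.1, hl.2, measure_univ])]
  simp [if_neg (Ne.symm hij)]

noncomputable def Xind {k : ℕ} (t : ℝ) (j : Fin k) : (Fin k → ℝ) → ℝ :=
  fun b => if b j ≤ t then 1 else 0

lemma Xind_meas {k : ℕ} (t : ℝ) (j : Fin k) : Measurable (Xind t j) :=
  Measurable.ite (measurableSet_le (measurable_pi_apply j) measurable_const)
    measurable_const measurable_const

lemma Xind_memℒp {k : ℕ} (t : ℝ) (j : Fin k) : MemLp (Xind t j) 2 (uniformBiases k) :=
  MemLp.of_bound (Xind_meas t j).aestronglyMeasurable 1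
    (ae_of_all _ fun b => by unfold Xind; split_ifs <;> simp)

lemma Xind_integral {k : ℕ} {t : ℝ} (h0 : 0 ≤ t) (h1 : t ≤ 1) (j : Fin k) :
    ∫ b, Xind t j b ∂(uniformBiases k) = t := by
  have he : (fun b => Xind t j b) =
      Set.indicator (Function.eval j ⁻¹' Set.Iic t) (fun _ => (1:ℝ)) := by
    funext b
    by_cases h : b j ≤ t <;>
      simp [Xind, Set.indicator_apply, h, Set.mem_preimage, Set.mem_Iic, Function.eval]
  rw [he, integral_indicator_const _ ((measurable_pi_apply j) measurableSet_Iic),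
    measureReal_def]
  erw [eval_preimage_measure j measurableSet_Iic, unif_Iic h0 h1]
  simp [ENNReal.toReal_ofReal h0]

lemma Xind_var {k : ℕ} {t : ℝ} (h0 : 0 ≤ t) (h1 : t ≤ 1) (j : Fin k) :
    variance (Xind t j) (uniformBiases k) = t - t^2 := by
  rw [variance_eq_sub (Xind_memℒp t j)]
  have hsq : (Xind t j)^2 = Xind t j := by
    funext b; simp only [Pi.pow_apply, Xind]; split_ifs <;> norm_num
  rw [hsq, Xind_integral h0 h1 j]

lemma Nsum_integral {k : ℕ} {t : ℝ} (h0 : 0 ≤ t) (h1 : t ≤ 1) :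
    ∫ b, (∑ j, Xind t j b) ∂(uniformBiases k) = k * t := by
  rw [integral_finset_sum _ (fun j _ => ((Xind_memℒp t j).integrable one_le_two))]
  simp [Xind_integral h0 h1, mul_comm]

lemma Nsum_var {k : ℕ} {t : ℝ} (h0 : 0 ≤ t) (h1 : t ≤ 1) :
    variance (∑ j, Xind t j) (uniformBiases k) = k * (t - t^2) := by
  rw [IndepFun.variance_sum (fun j _ => Xind_memℒp t j)]
  · simp [Xind_var h0 h1, mul_comm]; ring
  · intro i _ j hj hij
    have gm : Measurable (fun x : ℝ => if x ≤ t then (1:ℝ) else 0) :=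
      Measurable.ite measurableSet_Iic measurable_const measurable_const
    exact (indep_eval hij).comp gm gm

lemma count_cheb {k : ℕ} {t : ℝ} (h0 : 0 ≤ t) (h1 : t ≤ 1) {c : ℝ} (hc : 0 < c) :
    uniformBiases k {b | c ≤ |(∑ j, Xind t j b) - k * t|} ≤
      ENNReal.ofReal (k * (t * (1 - t)) / c^2) := by
  have hm : MemLp (∑ j, Xind t j) 2 (uniformBiases k) :=
    memLp_finset_sum' _ (fun j _ => Xind_memℒp t j)
  have h := meas_ge_le_variance_div_sq hm hc
  rw [Nsum_var h0 h1] at h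
  have hI : (uniformBiases k)[∑ j, Xind t j] = k * t := by
    rw [show ((uniformBiases k)[∑ j, Xind t j]) = ∫ b, (∑ j, Xind t j b) ∂(uniformBiases k) by
      congr 1; funext b; simp [Finset.sum_apply], Nsum_integral h0 h1]
  rw [hI] at h
  have hset : {b : Fin k → ℝ | c ≤ |(∑ j, Xind t j b) - k * t|} =
      {b : Fin k → ℝ | c ≤ |(∑ j, Xind t j) b - k * t|} := by
    ext b; simp [Finset.sum_apply]
  rw [hset]
  refine h.trans (le_of_eq ?_)
  ring_nf

lemma card_sorted {k : ℕ} (b : Fin k → ℝ) (a : ℝ) :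
    Fintype.card {j // sortedTuple b j ≤ a} = Fintype.card {j // b j ≤ a} :=
  Fintype.card_congr (Equiv.subtypeEquiv (Tuple.sort b) (fun _ => Iff.rfl))

lemma sorted_le_iff {k : ℕ} (b : Fin k → ℝ) (j : Fin k) (a : ℝ) :
    sortedTuple b j ≤ a ↔ (j:ℕ) < Fintype.card {i // b i ≤ a} := by
  rw [← card_sorted]
  rw [Fintype.card_subtype]
  exact (Tuple.lt_card_le_iff_apply_le_of_monotone (f := sortedTuple b) (a := a) (j := j)
    (Tuple.monotone_sort b)).symm

lemma card_eq_sum {k : ℕ} (b : Fin k → ℝ) (t : ℝ) :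
    (Fintype.card {j // b j ≤ t} : ℝ) = ∑ j, Xind t j b := by
  rw [Fintype.card_subtype, Finset.card_filter]
  push_cast
  simp [Xind]

lemma det_bound_s16 {k : ℕ} (b : Fin k → ℝ) (i : Fin k) (m : ℕ) {s u : ℝ} (hsu : s ≤ u)
    (hmi : m ≤ (i:ℕ))
    (h1 : m ≤ Fintype.card {j // b j ≤ s})
    (h2 : Fintype.card {j // b j ≤ u} ≤ (i:ℕ)) :
    (m:ℝ) * (u - s)^2 ≤
      ∑ ι ∈ Finset.univ.filter (fun ι => ι < i), (sortedTuple b i - sortedTuple b ι)^2 := by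
  have hik : m < k := lt_of_le_of_lt hmi i.isLt
  set T : Finset (Fin k) := Finset.univ.filter (fun ι => (ι:ℕ) < m) with hT
  have hTsub : T ⊆ Finset.univ.filter (fun ι => ι < i) := by
    intro ι hι
    simp only [hT, Finset.mem_filter, Finset.mem_univ, true_and] at hι ⊢
    exact Fin.lt_def.mpr (lt_of_lt_of_le hι hmi)
  have hTcard : T.card = m := by
    have he : T = Finset.Iio (⟨m, hik⟩ : Fin k) := by
      ext ι; simp [hT, Fin.lt_def]
    rw [he, Fin.card_Iio]
  have hup : ∀ ι ∈ T, sortedTuple b ι ≤ s := by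
    intro ι hι
    simp only [hT, Finset.mem_filter, Finset.mem_univ, true_and] at hι
    exact (sorted_le_iff b ι s).mpr (lt_of_lt_of_le hι h1)
  have hlow : u < sortedTuple b i := by
    by_contra h
    push_neg at h
    exact absurd ((sorted_le_iff b i u).mp h) (by omega)
  calc (m:ℝ) * (u - s)^2 = ∑ _ι ∈ T, (u - s)^2 := by
        rw [Finset.sum_const, hTcard, nsmul_eq_mul]
    _ ≤ ∑ ι ∈ T, (sortedTuple b i - sortedTuple b ι)^2 := by
        refine Finset.sum_le_sum fun ι hι => ?_
        have h3 := hup ι hι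
        exact pow_le_pow_left₀ (by linarith) (by linarith) 2
    _ ≤ ∑ ι ∈ Finset.univ.filter (fun ι => ι < i), (sortedTuple b i - sortedTuple b ι)^2 :=
        Finset.sum_le_sum_of_subset_of_nonneg hTsub (fun ι _ _ => sq_nonneg _)

set_option maxHeartbeats 2000000 in
/-- **Variance lower bound.** For all large `k` and every order-statistic index
`i` (with `1`-based rank `i+1 ≥ k^{3/4}`), with probability at least `1 - 64/√k`
the sum `∑_{ι < i} (b_{(i)} - b_{(ι)})²` is at least `(i+1)³/(32 k²)`. -/
theorem order_statistic_variance_lower_bound :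
    ∃ K₀ : ℕ, ∀ k : ℕ, K₀ ≤ k → ∀ i : Fin k,
      (k : ℝ) ^ ((3 : ℝ) / 4) ≤ (i : ℕ) + 1 →
      ENNReal.ofReal (1 - 64 / Real.sqrt k) ≤
        uniformBiases k
          {b | ((i : ℝ) + 1) ^ 3 / (32 * (k : ℝ) ^ 2) ≤
            ∑ ι ∈ Finset.univ.filter (fun ι => ι < i),
              (sortedTuple b i - sortedTuple b ι) ^ 2} := by
  refine ⟨16, fun k hk i hn => ?_⟩
  have hk16 : (16:ℝ) ≤ k := by exact_mod_cast hk
  have hkpos : (0:ℝ) < k := lt_of_lt_of_le (by norm_num) hk16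
  have hk1 : (1:ℝ) ≤ k := le_trans (by norm_num) hk16
  set nn : ℕ := (i:ℕ) + 1 with hnn
  have hnRcast : ((nn:ℝ)) = ((i:ℕ):ℝ) + 1 := by push_cast [hnn]; ring
  set nR : ℝ := (nn:ℝ) with hnR
  -- n ≥ 4
  have hsqrt4 : (4:ℝ) ≤ Real.sqrt k := by
    have : Real.sqrt 16 ≤ Real.sqrt k := Real.sqrt_le_sqrt hk16
    rwa [show (16:ℝ) = 4^2 by norm_num, Real.sqrt_sq (by norm_num : (0:ℝ) ≤ 4)] at this
  have hsqrt_rpow : Real.sqrt k = (k:ℝ) ^ ((1:ℝ)/2) := Real.sqrt_eq_rpow k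
  have hrpow_le : (k:ℝ) ^ ((1:ℝ)/2) ≤ (k:ℝ) ^ ((3:ℝ)/4) :=
    Real.rpow_le_rpow_of_exponent_le hk1 (by norm_num)
  have hn4 : (4:ℝ) ≤ nR := by
    rw [hnRcast]
    calc (4:ℝ) ≤ Real.sqrt k := hsqrt4
    _ ≤ (k:ℝ) ^ ((3:ℝ)/4) := by rw [hsqrt_rpow]; exact hrpow_le
    _ ≤ _ := hn
  have hnn4 : 4 ≤ nn := by rw [hnR] at hn4; exact_mod_cast hn4
  have hnk : nn ≤ k := hnn ▸ i.isLt
  have hnRk : nR ≤ k := by rw [hnR]; exact_mod_cast hnk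
  have hnRpos : (0:ℝ) < nR := by linarith
  set m : ℕ := (nn + 1) / 2 with hm
  have hm1 : 2 * m ≤ nn + 1 := by omega
  have hm2 : nn ≤ 2 * m := by omega
  have hmi : m ≤ (i:ℕ) := by omega
  have hmR1 : (m:ℝ) ≤ (nR + 1) / 2 := by
    rw [hnR]; have : ((2*m : ℕ):ℝ) ≤ ((nn+1 : ℕ):ℝ) := by exact_mod_cast hm1
    push_cast at this ⊢; linarith
  have hmR2 : nR / 2 ≤ (m:ℝ) := by
    rw [hnR]; have : ((nn : ℕ):ℝ) ≤ ((2*m : ℕ):ℝ) := by exact_mod_cast hm2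
    push_cast at this ⊢; linarith
  set s : ℝ := 5 * nR / (8 * k) with hs
  set u : ℝ := 7 * nR / (8 * k) with hu
  have hs0 : 0 ≤ s := by positivity
  have hu0 : 0 ≤ u := by positivity
  have hs1 : s ≤ 1 := by rw [hs, div_le_one (by positivity)]; linarith
  have hu1 : u ≤ 1 := by rw [hu, div_le_one (by positivity)]; linarith
  have hsu : s ≤ u := by rw [hs, hu]; gcongr; norm_num
  have hks : (k:ℝ) * s = 5 * nR / 8 := by rw [hs]; field_simp
  have hku : (k:ℝ) * u = 7 * nR / 8 := by rw [hu]; field_simp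
  set c : ℝ := nR / 8 with hc
  have hcpos : 0 < c := by positivity
  -- the two bad events
  set Bad1 : Set (Fin k → ℝ) := {b | c ≤ |(∑ j, Xind s j b) - k * s|} with hBad1
  set Bad2 : Set (Fin k → ℝ) := {b | c ≤ |(∑ j, Xind u j b) - k * u|} with hBad2
  -- Chebyshev bounds
  have hcheb_bound : ∀ t : ℝ, 0 ≤ t → t ≤ 1 → (k:ℝ) * (t * (1 - t)) / c^2 ≤ 16 / Real.sqrt k := by
    intro t h0 h1
    have ht14 : t * (1 - t) ≤ 1/4 := by nlinarith [sq_nonneg (2*t - 1)]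
    have hsqrtpos : (0:ℝ) < Real.sqrt k := by linarith
    have hnR2 : (k:ℝ) * Real.sqrt k ≤ nR ^ 2 := by
      have h34 : (k:ℝ) * Real.sqrt k = (k:ℝ) ^ ((3:ℝ)/4) * (k:ℝ) ^ ((3:ℝ)/4) := by
        rw [hsqrt_rpow,
          show (k:ℝ) * (k:ℝ) ^ ((1:ℝ)/2) = (k:ℝ) ^ (1:ℝ) * (k:ℝ) ^ ((1:ℝ)/2) by
            rw [Real.rpow_one],
          ← Real.rpow_add hkpos, ← Real.rpow_add hkpos]
        norm_num
      have hnn' : (k:ℝ) ^ ((3:ℝ)/4) ≤ nR := by rw [hnRcast]; exact hn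
      have h0' : (0:ℝ) ≤ (k:ℝ) ^ ((3:ℝ)/4) := Real.rpow_nonneg hkpos.le _
      rw [h34, sq]
      exact mul_le_mul hnn' hnn' h0' (by linarith)
    rw [div_le_div_iff₀ (by positivity) (by positivity)]
    have hc2 : c^2 = nR^2/64 := by rw [hc]; ring
    rw [hc2]
    nlinarith [mul_le_mul_of_nonneg_left ht14 hkpos.le, Real.sqrt_nonneg (k:ℝ),
      mul_le_mul_of_nonneg_left hnR2 (by norm_num : (0:ℝ) ≤ 16)]
  have hB1 : uniformBiases k Bad1 ≤ ENNReal.ofReal (16 / Real.sqrt k) :=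
    (count_cheb hs0 hs1 hcpos).trans (ENNReal.ofReal_le_ofReal (hcheb_bound s hs0 hs1))
  have hB2 : uniformBiases k Bad2 ≤ ENNReal.ofReal (16 / Real.sqrt k) :=
    (count_cheb hu0 hu1 hcpos).trans (ENNReal.ofReal_le_ofReal (hcheb_bound u hu0 hu1))
  -- the good event implies the conclusion event
  set Ev : Set (Fin k → ℝ) := {b | ((i : ℝ) + 1) ^ 3 / (32 * (k : ℝ) ^ 2) ≤
      ∑ ι ∈ Finset.univ.filter (fun ι => ι < i),
        (sortedTuple b i - sortedTuple b ι) ^ 2} with hEv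
  have hGood : Bad1ᶜ ∩ Bad2ᶜ ⊆ Ev := by
    intro b hb
    obtain ⟨hb1, hb2⟩ := hb
    simp only [hBad1, Set.mem_compl_iff, Set.mem_setOf_eq, not_le] at hb1
    simp only [hBad2, Set.mem_compl_iff, Set.mem_setOf_eq, not_le] at hb2
    -- count at s is at least m
    have hcount_s : m ≤ Fintype.card {j // b j ≤ s} := by
      by_contra hlt
      push_neg at hlt
      have hcR : (Fintype.card {j // b j ≤ s} : ℝ) ≤ (m:ℝ) - 1 := by
        have : Fintype.card {j // b j ≤ s} + 1 ≤ m := hlt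
        have := (Nat.cast_le (α := ℝ)).mpr this
        push_cast at this; linarith
      have habs : c ≤ |(∑ j, Xind s j b) - k * s| := by
        rw [← card_eq_sum]
        have h5 : c ≤ k * s - (Fintype.card {j // b j ≤ s} : ℝ) := by
          rw [hks, hc]; linarith [hmR1]
        calc c ≤ -((Fintype.card {j // b j ≤ s} : ℝ) - k * s) := by linarith
        _ ≤ |(Fintype.card {j // b j ≤ s} : ℝ) - k * s| := neg_le_abs _
      linarith
    -- count at u is at most i
    have hcount_u : Fintype.card {j // b j ≤ u} ≤ (i:ℕ) := by
      by_contra hlt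
      push_neg at hlt
      have hcR : nR ≤ (Fintype.card {j // b j ≤ u} : ℝ) := by
        rw [hnR]; exact_mod_cast hlt
      have habs : c ≤ |(∑ j, Xind u j b) - k * u| := by
        rw [← card_eq_sum]
        have h5 : c ≤ (Fintype.card {j // b j ≤ u} : ℝ) - k * u := by
          rw [hku, hc]; linarith
        exact h5.trans (le_abs_self _)
      linarith
    have hdet := det_bound_s16 b i m hsu hmi hcount_s hcount_u
    rw [hEv, Set.mem_setOf_eq]
    refine le_trans ?_ hdet
    have hus : u - s = nR / (4 * k) := by rw [hu, hs]; field_simp; ring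
    rw [hus]
    have hiR : ((i : ℝ) + 1) = nR := hnRcast.symm
    rw [hiR]
    rw [div_pow, mul_pow]
    rw [div_le_iff₀ (by positivity), mul_comm ((m:ℝ)) _, mul_assoc]
    rw [div_mul_eq_mul_div, le_div_iff₀ (by positivity)]
    nlinarith [mul_le_mul_of_nonneg_left hmR2 (by positivity : (0:ℝ) ≤ 32 * nR^2 * (k:ℝ)^2)]
  -- assemble the measure bound
  have hunion : uniformBiases k (Bad1 ∪ Bad2) ≤ ENNReal.ofReal (32 / Real.sqrt k) := by
    refine (measure_union_le _ _).trans ?_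
    have : ENNReal.ofReal (16 / Real.sqrt k) + ENNReal.ofReal (16 / Real.sqrt k)
        = ENNReal.ofReal (32 / Real.sqrt k) := by
      rw [← ENNReal.ofReal_add (by positivity) (by positivity)]
      congr 1; ring
    calc uniformBiases k Bad1 + uniformBiases k Bad2
        ≤ ENNReal.ofReal (16 / Real.sqrt k) + ENNReal.ofReal (16 / Real.sqrt k) :=
          add_le_add hB1 hB2
    _ = _ := this
  have hGmeas : 1 - ENNReal.ofReal (32 / Real.sqrt k) ≤ uniformBiases k Ev := by
    rw [tsub_le_iff_right]
    have h1 : (1:ENNReal) = uniformBiases k Set.univ := (measure_univ).symm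
    rw [h1]
    have : (Set.univ : Set (Fin k → ℝ)) = (Bad1ᶜ ∩ Bad2ᶜ) ∪ (Bad1 ∪ Bad2) := by
      rw [← Set.compl_union, Set.compl_union_self]
    rw [this]
    calc uniformBiases k ((Bad1ᶜ ∩ Bad2ᶜ) ∪ (Bad1 ∪ Bad2))
        ≤ uniformBiases k (Bad1ᶜ ∩ Bad2ᶜ) + uniformBiases k (Bad1 ∪ Bad2) :=
          measure_union_le _ _
    _ ≤ uniformBiases k Ev + ENNReal.ofReal (32 / Real.sqrt k) :=
          add_le_add (measure_mono hGood) hunion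
  refine le_trans ?_ hGmeas
  have hsqrtpos : (0:ℝ) < Real.sqrt k := by linarith
  calc ENNReal.ofReal (1 - 64 / Real.sqrt k)
      ≤ ENNReal.ofReal (1 - 32 / Real.sqrt k) := by
        apply ENNReal.ofReal_le_ofReal
        have : (32:ℝ) / Real.sqrt k ≤ 64 / Real.sqrt k := by
          gcongr
          norm_num
        linarith
  _ = 1 - ENNReal.ofReal (32 / Real.sqrt k) := by
        rw [← ENNReal.ofReal_one, ← ENNReal.ofReal_sub _ (by positivity)]
end
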